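/- arXiv:2510.23102 — 5 statements merged into one kernel-verified Lean document; each statement's English description precedes it below -/
import Mathlib

section
/- Let τ and τ' be finite non-planar rooted trees such that τ is obtained from τ' by grafting a single new leaf onto some vertex v of τ'. Let #(τ'→τ) be the number of vertices w of τ' such that grafting a new leaf onto w yields a tree isomorphic to τ, and let #(τ→τ') be the number of leaves of τ whose removal yields a tree isomorphic to τ'. Then #(τ'→τ)·σ(τ) = #(τ→τ')·σ(τ'). -/
/-- A finite non-planar rooted tree: vertex set `Fin (n+1)`, distinguished root `0`,
and edges oriented towards the root, encoded by the parent map (the root is a fixed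
point of the parent map, and every vertex reaches the root by iterating it). -/
structure RTree : Type where
  n : ℕ
  parent : Fin (n + 1) → Fin (n + 1)
  parent_root : parent 0 = 0
  reaches_root : ∀ v, parent^[n] v = 0

namespace RTree

/-- Isomorphism of rooted trees: a root-preserving bijection of vertices commuting
with the parent maps. -/
def Iso (t₁ t₂ : RTree) : Prop :=
  ∃ e : Fin (t₁.n + 1) ≃ Fin (t₂.n + 1), e 0 = 0 ∧ ∀ v, t₂.parent (e v) = e (t₁.parent v)

/-- `σ(τ)`: the order of the automorphism group of `τ` (root-preserving graph
automorphisms). -/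
noncomputable def sigma (t : RTree) : ℕ :=
  Nat.card {g : Equiv.Perm (Fin (t.n + 1)) //
    g 0 = 0 ∧ ∀ v, t.parent (g v) = g (t.parent v)}

/-- A vertex is a leaf if it is not the root and has no incoming edge. -/
def IsLeaf (t : RTree) (v : Fin (t.n + 1)) : Prop :=
  v ≠ 0 ∧ ∀ w, t.parent w = v → w = v

/-- `t'` is (a copy of) the tree obtained from `t` by grafting one new leaf onto the
vertex `v` (a new vertex attached to `v` by a new edge oriented towards `v`). -/
def IsGraft (t : RTree) (v : Fin (t.n + 1)) (t' : RTree) : Prop :=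
  t'.n = t.n + 1 ∧
  ∃ e : Fin (t.n + 1) ↪ Fin (t'.n + 1), e 0 = 0 ∧
    (∀ w, t'.parent (e w) = e (t.parent w)) ∧
    ∀ u, u ∉ Set.range e → t'.parent u = e v

/-- `t'` is (a copy of) the tree obtained from `t` by removing the leaf `ℓ`
together with its edge. -/
def IsLeafRemoval (t : RTree) (ℓ : Fin (t.n + 1)) (t' : RTree) : Prop :=
  t.IsLeaf ℓ ∧
  ∃ e : Fin (t'.n + 1) ↪ Fin (t.n + 1), e 0 = 0 ∧ Set.range e = {u | u ≠ ℓ} ∧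
    ∀ w, t.parent (e w) = e (t'.parent w)

/-- `#(τ'→τ)`: the number of vertices `w` of `τ'` such that grafting a new leaf
onto `w` yields a tree isomorphic to `τ`. -/
noncomputable def numGraftSites (t' t : RTree) : ℕ :=
  Nat.card {w : Fin (t'.n + 1) // ∃ t'' : RTree, t'.IsGraft w t'' ∧ Iso t'' t}

/-- `#(τ→τ')`: the number of leaves of `τ` whose removal yields a tree isomorphic
to `τ'`. -/
noncomputable def numRemovableLeaves (t t' : RTree) : ℕ :=
  Nat.card {ℓ : Fin (t.n + 1) // ∃ t'' : RTree, t.IsLeafRemoval ℓ t'' ∧ Iso t'' t'}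

end RTree

open RTree

section AuxCount

lemma card_fiber_aux {X I G : Type*} (p : X → I)
    (h : ∀ i : I, (∃ x, p x = i) → Nonempty ({x // p x = i} ≃ G)) :
    Nat.card X = Nat.card {i // ∃ x, p x = i} * Nat.card G := by
  classical
  have e : X ≃ {i // ∃ x, p x = i} × G := by
    refine Equiv.trans ?_ (Equiv.sigmaEquivProd _ _)
    refine Equiv.trans ?_ (Equiv.sigmaCongrRight fun i => (h i.1 i.2).some)
    exact { toFun := fun x => ⟨⟨p x, x, rfl⟩, x, rfl⟩
            invFun := fun y => y.2.1
            left_inv := fun x => rfl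
            right_inv := fun y => by
              obtain ⟨⟨i, hi⟩, ⟨x, hx⟩⟩ := y
              simp only [Subtype.coe_mk] at hx
              subst hx
              rfl }
  rw [Nat.card_congr e, Nat.card_prod]

lemma exists_unique_not_mem_range {α β : Type*} [Fintype α] [Fintype β]
    (hcard : Fintype.card β = Fintype.card α + 1) (f : α ↪ β) :
    ∃! u : β, u ∉ Set.range f := by
  classical
  have h1 : (Finset.univ.image f)ᶜ.card = 1 := by
    rw [Finset.card_compl, Finset.card_image_of_injective _ f.injective,
      Finset.card_univ, hcard]
    omega
  obtain ⟨u, hu⟩ := Finset.card_eq_one.mp h1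
  have key : ∀ x : β, x ∉ Set.range f ↔ x = u := by
    intro x
    rw [← Finset.mem_singleton, ← hu, Finset.mem_compl]
    simp
  exact ⟨u, (key u).mpr rfl, fun y hy => (key y).mp hy⟩

end AuxCount

namespace RTreeProof

/-- root/parent preserving embeddings `t' ↪ t`. -/
def Emb (t' t : RTree) : Type :=
  {f : Fin (t'.n + 1) ↪ Fin (t.n + 1) // f 0 = 0 ∧ ∀ w, t.parent (f w) = f (t'.parent w)}

def AutT (t : RTree) : Type :=
  {g : Equiv.Perm (Fin (t.n + 1)) // g 0 = 0 ∧ ∀ v, t.parent (g v) = g (t.parent v)}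

lemma sigma_eq (t : RTree) : t.sigma = Nat.card (AutT t) := rfl

variable {t' t : RTree}

lemma fin_card (hn : t.n = t'.n + 1) :
    Fintype.card (Fin (t.n + 1)) = Fintype.card (Fin (t'.n + 1)) + 1 := by
  simp [hn]

lemma parent_fix_eq_zero (t : RTree) {u : Fin (t.n + 1)} (h : t.parent u = u) : u = 0 := by
  have h2 := Function.iterate_fixed h t.n
  rw [t.reaches_root u] at h2
  exact h2.symm

noncomputable def miss (hn : t.n = t'.n + 1) (f : Fin (t'.n + 1) ↪ Fin (t.n + 1)) :
    Fin (t.n + 1) :=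
  (exists_unique_not_mem_range (fin_card hn) f).exists.choose

lemma miss_not_mem (hn : t.n = t'.n + 1) (f : Fin (t'.n + 1) ↪ Fin (t.n + 1)) :
    miss hn f ∉ Set.range f :=
  (exists_unique_not_mem_range (fin_card hn) f).exists.choose_spec

lemma eq_miss (hn : t.n = t'.n + 1) (f : Fin (t'.n + 1) ↪ Fin (t.n + 1))
    {u : Fin (t.n + 1)} (h : u ∉ Set.range f) : u = miss hn f := by
  obtain ⟨w, hw, huniq⟩ := exists_unique_not_mem_range (fin_card hn) f
  rw [huniq u h, huniq _ (miss_not_mem hn f)]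

lemma miss_ne_zero (hn : t.n = t'.n + 1) (f : Emb t' t) : miss hn f.1 ≠ 0 := by
  intro h
  apply miss_not_mem hn f.1
  rw [h]
  exact ⟨0, f.2.1⟩

lemma range_eq (hn : t.n = t'.n + 1) (f : Emb t' t) :
    Set.range f.1 = {u | u ≠ miss hn f.1} := by
  ext u
  simp only [Set.mem_setOf_eq]
  constructor
  · rintro ⟨a, rfl⟩ h
    apply miss_not_mem hn f.1
    rw [← h]
    exact ⟨a, rfl⟩
  · intro h
    by_contra hc
    exact h (eq_miss hn f.1 hc)

lemma parent_miss_mem (hn : t.n = t'.n + 1) (f : Emb t' t) :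
    t.parent (miss hn f.1) ∈ Set.range f.1 := by
  by_contra hc
  exact miss_ne_zero hn f (parent_fix_eq_zero t (eq_miss hn f.1 hc))

noncomputable def site (hn : t.n = t'.n + 1) (f : Emb t' t) : Fin (t'.n + 1) :=
  (parent_miss_mem hn f).choose

lemma site_spec (hn : t.n = t'.n + 1) (f : Emb t' t) :
    f.1 (site hn f) = t.parent (miss hn f.1) :=
  (parent_miss_mem hn f).choose_spec

lemma miss_isLeaf (hn : t.n = t'.n + 1) (f : Emb t' t) : t.IsLeaf (miss hn f.1) := by
  refine ⟨miss_ne_zero hn f, fun u hu => ?_⟩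
  have hnr : u ∉ Set.range f.1 := by
    rintro ⟨a, rfl⟩
    apply miss_not_mem hn f.1
    rw [← hu, f.2.2 a]
    exact ⟨_, rfl⟩
  exact eq_miss hn f.1 hnr

lemma fiberL (hn : t.n = t'.n + 1) (ℓ : Fin (t.n + 1))
    (hne : ∃ f : Emb t' t, miss hn f.1 = ℓ) :
    Nonempty ({f : Emb t' t // miss hn f.1 = ℓ} ≃ AutT t') := by
  classical
  obtain ⟨f₀, hf₀⟩ := hne
  have hnotin : ∀ (f : Emb t' t), miss hn f.1 = ℓ → ℓ ∉ Set.range f.1 := by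
    intro f hf
    rw [range_eq hn f, hf]
    simp
  have hin : ∀ (f : Emb t' t), miss hn f.1 = ℓ →
      ∀ u : Fin (t.n + 1), u ≠ ℓ → u ∈ Set.range f.1 := by
    intro f hf u hu
    rw [range_eq hn f, hf]
    exact hu
  let Φ : AutT t' → {f : Emb t' t // miss hn f.1 = ℓ} := fun g =>
    ⟨⟨g.1.toEmbedding.trans f₀.1,
      by simp [g.2.1, f₀.2.1],
      by
        intro x
        simp only [Function.Embedding.trans_apply, Equiv.coe_toEmbedding]
        rw [f₀.2.2, g.2.2]⟩,
      by
        refine (eq_miss hn _ ?_).symm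
        rintro ⟨a, ha⟩
        apply hnotin f₀ hf₀
        exact ⟨g.1 a, ha⟩⟩
  have hΦinj : Function.Injective Φ := by
    intro g₁ g₂ hg
    have hfn := congrArg (fun z => z.1.1) hg
    apply Subtype.ext
    apply Equiv.ext
    intro x
    apply f₀.1.injective
    exact DFunLike.congr_fun hfn x
  have hΦsurj : Function.Surjective Φ := by
    rintro ⟨f, hf⟩
    have hmem : ∀ x, f.1 x ∈ Set.range f₀.1 := by
      intro x
      refine hin f₀ hf₀ _ ?_
      intro hx
      exact hnotin f hf ⟨x, hx⟩
    set k : Fin (t'.n + 1) → Fin (t'.n + 1) := fun x => Function.invFun f₀.1 (f.1 x) with hk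
    have hkey : ∀ x, f₀.1 (k x) = f.1 x := fun x => Function.invFun_eq (hmem x)
    have hkinj : Function.Injective k := by
      intro a b hab
      apply f.1.injective
      rw [← hkey a, ← hkey b, hab]
    have hkbij := Finite.injective_iff_bijective.mp hkinj
    refine ⟨⟨Equiv.ofBijective k hkbij, ?_, ?_⟩, ?_⟩
    · apply f₀.1.injective
      show f₀.1 (k 0) = f₀.1 0
      rw [hkey, f.2.1, f₀.2.1]
    · intro x
      apply f₀.1.injective
      show f₀.1 (t'.parent (k x)) = f₀.1 (k (t'.parent x))
      rw [← f₀.2.2 (k x), hkey x, hkey (t'.parent x)]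
      exact f.2.2 x
    · apply Subtype.ext
      apply Subtype.ext
      apply DFunLike.ext
      intro x
      exact hkey x
  exact ⟨(Equiv.ofBijective Φ ⟨hΦinj, hΦsurj⟩).symm⟩

lemma fiberW (hn : t.n = t'.n + 1) (w : Fin (t'.n + 1))
    (hne : ∃ f : Emb t' t, site hn f = w) :
    Nonempty ({f : Emb t' t // site hn f = w} ≃ AutT t) := by
  classical
  obtain ⟨f₀, hf₀⟩ := hne
  set m₀ := miss hn f₀.1 with hm₀
  -- the embedding associated to an automorphism
  let E : AutT t → Emb t' t := fun g =>
    ⟨f₀.1.trans g.1.toEmbedding,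
      by simp [f₀.2.1, g.2.1],
      by
        intro x
        simp only [Function.Embedding.trans_apply, Equiv.coe_toEmbedding]
        rw [g.2.2, f₀.2.2]⟩
  have hEapp : ∀ (g : AutT t) (x : Fin (t'.n + 1)), (E g).1 x = g.1 (f₀.1 x) :=
    fun g x => rfl
  have hmissE : ∀ g : AutT t, g.1 m₀ = miss hn (E g).1 := by
    intro g
    apply eq_miss hn (E g).1
    rintro ⟨x, hx⟩
    apply miss_not_mem hn f₀.1
    have hfx : f₀.1 x = m₀ := g.1.injective hx
    exact ⟨x, hfx⟩
  have hsiteE : ∀ g : AutT t, site hn (E g) = w := by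
    intro g
    apply (E g).1.injective
    rw [site_spec hn (E g), ← hmissE g, g.2.2 m₀, ← site_spec hn f₀, hf₀]
    exact rfl
  let Φ : AutT t → {f : Emb t' t // site hn f = w} := fun g => ⟨E g, hsiteE g⟩
  have hΦinj : Function.Injective Φ := by
    intro g₁ g₂ hg
    have hE : E g₁ = E g₂ := congrArg (fun z => z.1) hg
    have hfn : ∀ x, g₁.1 (f₀.1 x) = g₂.1 (f₀.1 x) := by
      intro x
      have := congrArg (fun z : Emb t' t => z.1 x) hE
      exact this
    have hm : g₁.1 m₀ = g₂.1 m₀ := by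
      rw [hmissE g₁, hmissE g₂, hE]
    apply Subtype.ext
    apply Equiv.ext
    intro u
    by_cases hu : u = m₀
    · rw [hu]; exact hm
    · have : u ∈ Set.range f₀.1 := by
        rw [range_eq hn f₀]
        exact hu
      obtain ⟨x, rfl⟩ := this
      exact hfn x
  have hΦsurj : Function.Surjective Φ := by
    rintro ⟨f, hf⟩
    have hinv : ∀ u : Fin (t.n + 1), u ≠ m₀ → f₀.1 (Function.invFun f₀.1 u) = u := by
      intro u hu
      apply Function.invFun_eq
      have : u ∈ Set.range f₀.1 := by
        rw [range_eq hn f₀]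
        exact hu
      exact this
    set g : Fin (t.n + 1) → Fin (t.n + 1) :=
      fun u => if u = m₀ then miss hn f.1 else f.1 (Function.invFun f₀.1 u) with hgdef
    have hne₀ : ∀ x, f₀.1 x ≠ m₀ := by
      intro x hc
      exact miss_not_mem hn f₀.1 ⟨x, hc⟩
    have hgf₀ : ∀ x, g (f₀.1 x) = f.1 x := by
      intro x
      simp only [hgdef, if_neg (hne₀ x)]
      congr 1
      exact Function.leftInverse_invFun f₀.1.injective x
    have hgm : g m₀ = miss hn f.1 := by simp [hgdef]
    have hginj : Function.Injective g := by
      intro a b hab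
      by_cases ha : a = m₀ <;> by_cases hb : b = m₀
      · rw [ha, hb]
      · exfalso
        rw [ha, hgm, hgdef] at hab
        simp only [if_neg hb] at hab
        exact miss_not_mem hn f.1 ⟨_, hab.symm⟩
      · exfalso
        rw [hb, hgm, hgdef] at hab
        simp only [if_neg ha] at hab
        exact miss_not_mem hn f.1 ⟨_, hab⟩
      · rw [hgdef] at hab
        simp only [if_neg ha, if_neg hb] at hab
        have := f.1.injective hab
        rw [← hinv a ha, ← hinv b hb, this]
    have hgbij := Finite.injective_iff_bijective.mp hginj
    have hg0 : g 0 = 0 := by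
      have h1 := hgf₀ 0
      rw [f₀.2.1, f.2.1] at h1
      exact h1
    have hgpar : ∀ u, t.parent (g u) = g (t.parent u) := by
      intro u
      by_cases hu : u = m₀
      · rw [hu, hgm, ← site_spec hn f, hf]
        have h2 : t.parent m₀ = f₀.1 w := by
          rw [← hf₀, site_spec hn f₀]
        rw [h2, hgf₀ w]
      · have : u ∈ Set.range f₀.1 := by
          rw [range_eq hn f₀]
          exact hu
        obtain ⟨x, rfl⟩ := this
        rw [hgf₀ x, f.2.2 x, f₀.2.2 x, hgf₀ (t'.parent x)]
    refine ⟨⟨Equiv.ofBijective g hgbij, hg0, hgpar⟩, ?_⟩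
    apply Subtype.ext
    apply Subtype.ext
    apply DFunLike.ext
    intro x
    exact hgf₀ x
  exact ⟨(Equiv.ofBijective Φ ⟨hΦinj, hΦsurj⟩).symm⟩

lemma goodL_iff (hn : t.n = t'.n + 1) (ℓ : Fin (t.n + 1)) :
    (∃ f : Emb t' t, miss hn f.1 = ℓ) ↔
      ∃ t'' : RTree, t.IsLeafRemoval ℓ t'' ∧ Iso t'' t' := by
  constructor
  · rintro ⟨f, rfl⟩
    refine ⟨t', ⟨miss_isLeaf hn f, f.1, f.2.1, ?_, f.2.2⟩, Equiv.refl _, rfl, fun v => rfl⟩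
    exact range_eq hn f
  · rintro ⟨t'', ⟨hleaf, e, he0, herange, hepar⟩, j, hj0, hjpar⟩
    have hjs0 : j.symm 0 = 0 := by
      rw [Equiv.symm_apply_eq, hj0]
    have hjspar : ∀ x, t''.parent (j.symm x) = j.symm (t'.parent x) := by
      intro x
      rw [Equiv.eq_symm_apply, ← hjpar, Equiv.apply_symm_apply]
    refine ⟨⟨j.symm.toEmbedding.trans e, ?_, ?_⟩, ?_⟩
    · simp only [Function.Embedding.trans_apply, Equiv.coe_toEmbedding, hjs0, he0]
    · intro x
      simp only [Function.Embedding.trans_apply, Equiv.coe_toEmbedding]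
      rw [hepar, hjspar]
    · refine (eq_miss hn _ ?_).symm
      rintro ⟨a, ha⟩
      have : ℓ ∈ Set.range e := ⟨j.symm a, ha⟩
      rw [herange] at this
      exact this rfl

lemma goodW_iff (hn : t.n = t'.n + 1) (w : Fin (t'.n + 1)) :
    (∃ f : Emb t' t, site hn f = w) ↔
      ∃ t'' : RTree, t'.IsGraft w t'' ∧ Iso t'' t := by
  constructor
  · rintro ⟨f, rfl⟩
    refine ⟨t, ⟨hn, f.1, f.2.1, f.2.2, ?_⟩, Equiv.refl _, rfl, fun v => rfl⟩
    intro u hu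
    rw [eq_miss hn f.1 hu]
    exact (site_spec hn f).symm
  · rintro ⟨t'', ⟨hn'', e, he0, hepar, hout⟩, j, hj0, hjpar⟩
    have hc : Fintype.card (Fin (t''.n + 1)) = Fintype.card (Fin (t'.n + 1)) + 1 := by
      simp [hn'']
    set F : Fin (t'.n + 1) ↪ Fin (t.n + 1) := e.trans j.toEmbedding with hF
    have hFapp : ∀ x, F x = j (e x) := fun x => rfl
    refine ⟨⟨F, ?_, ?_⟩, ?_⟩
    · rw [hFapp, he0, hj0]
    · intro x
      rw [hFapp, hFapp, hjpar, hepar]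
    · set f : Emb t' t := ⟨F, by rw [hFapp, he0, hj0], by
        intro x
        rw [hFapp, hFapp, hjpar, hepar]⟩ with hfdef
      show site hn f = w
      set m := miss hn f.1 with hm
      have hjm : j.symm m ∉ Set.range e := by
        rintro ⟨x, hx⟩
        apply miss_not_mem hn f.1
        refine ⟨x, ?_⟩
        rw [hFapp, hx, Equiv.apply_symm_apply]
      have h2 : t''.parent (j.symm m) = e w := hout _ hjm
      have h3 : t.parent m = F w := by
        conv_lhs => rw [← Equiv.apply_symm_apply j m]
        rw [hjpar, h2, hFapp]
      apply f.1.injective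
      rw [site_spec hn f, h3]
end RTreeProof

open RTreeProof

/-- If the rooted tree `τ` is obtained from `τ'` by grafting a single
new leaf onto some vertex of `τ'`, then `#(τ'→τ)·σ(τ) = #(τ→τ')·σ(τ')`. -/
theorem stmt1 (t' t : RTree) (h : ∃ v : Fin (t'.n + 1), t'.IsGraft v t) :
    numGraftSites t' t * t.sigma = numRemovableLeaves t t' * t'.sigma := by
  obtain ⟨v, hv⟩ := h
  have hn : t.n = t'.n + 1 := hv.1
  have hA : Nat.card (Emb t' t) = numRemovableLeaves t t' * t'.sigma := by
    have h0 := card_fiber_aux (fun f : Emb t' t => miss hn f.1) (fiberL hn)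
    have h1 : Nat.card {ℓ : Fin (t.n + 1) // ∃ f : Emb t' t, miss hn f.1 = ℓ} =
        numRemovableLeaves t t' :=
      Nat.card_congr (Equiv.subtypeEquivRight fun ℓ => goodL_iff hn ℓ)
    exact h0.trans (congrArg₂ (· * ·) h1 (sigma_eq t').symm)
  have hB : Nat.card (Emb t' t) = numGraftSites t' t * t.sigma := by
    have h0 := card_fiber_aux (fun f : Emb t' t => site hn f) (fiberW hn)
    have h1 : Nat.card {w : Fin (t'.n + 1) // ∃ f : Emb t' t, site hn f = w} =
        numGraftSites t' t :=
      Nat.card_congr (Equiv.subtypeEquivRight fun w => goodW_iff hn w)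
    exact h0.trans (congrArg₂ (· * ·) h1 (sigma_eq t).symm)
  rw [← hA, ← hB]
end

section
/- Let α, β, f: ℝ → ℝ be smooth, u₀ ∈ ℝ, and let L be the operator (Lg)(x) = α(x)g'(x) + ½β(x)²g''(x). For every exotic coloured tree τ, L applied to the function u₀ ↦ Υ(τ)(u₀) satisfies L Υ(τ) = Υ(•_α↷τ) + ½ Υ(••↷τ), where •_α↷τ := Σ_{v ∈ V(τ)} •_α↷_v τ and ••↷τ := Σ_{v,w ∈ V(τ)} ••↷_{v,w} τ, and Υ is extended linearly to formal linear combinations of exotic coloured trees. -/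
/-- The two colours for non-root vertices of an exotic coloured tree. -/
inductive XColour : Type
  | alpha : XColour
  | beta : XColour
  deriving DecidableEq

/-- An exotic coloured tree: a finite non-planar rooted tree with vertex set
`Fin (n+1)`, distinguished (uncoloured) root `0`, edges oriented towards the root
(encoded by the parent map), whose non-root vertices are coloured by `{α, β}`,
together with a fixed perfect pairing `mate` of the β-vertices (the exotic
decoration); in particular the number of β-vertices is even. -/
structure ExoticTree : Type where
  n : ℕ
  parent : Fin (n + 1) → Fin (n + 1)
  colour : Fin (n + 1) → Option XColour
  mate : Fin (n + 1) → Fin (n + 1)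
  parent_root : parent 0 = 0
  reaches_root : ∀ v, parent^[n] v = 0
  colour_root : colour 0 = none
  colour_nonroot : ∀ v, v ≠ 0 → colour v ≠ none
  mate_beta : ∀ v, colour v = some XColour.beta →
      colour (mate v) = some XColour.beta ∧ mate (mate v) = v ∧ mate v ≠ v
  mate_nonbeta : ∀ v, colour v ≠ some XColour.beta → mate v = v

namespace ExoticTree

/-- The number of children (incoming edges) `𝔫(v)` of a vertex. -/
def nChildren (t : ExoticTree) (v : Fin (t.n + 1)) : ℕ :=
  (Finset.univ.filter fun w => t.parent w = v ∧ w ≠ v).card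

/-- A vertex is a leaf if it has no children. -/
def IsLeaf (t : ExoticTree) (v : Fin (t.n + 1)) : Prop := ∀ w, t.parent w = v → w = v

/-- The number of α-vertices. -/
def numAlpha (t : ExoticTree) : ℕ :=
  (Finset.univ.filter fun v : Fin (t.n + 1) => t.colour v = some XColour.alpha).card

/-- The number of β-vertices. -/
def numBeta (t : ExoticTree) : ℕ :=
  (Finset.univ.filter fun v : Fin (t.n + 1) => t.colour v = some XColour.beta).card

/-- The number of β-pairs (each pair represented by its smaller member). -/
def numPairs (t : ExoticTree) : ℕ :=
  (Finset.univ.filter fun v : Fin (t.n + 1) =>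
    t.colour v = some XColour.beta ∧ v < t.mate v).card

/-- The effective size `|τ|`: `1` (the root) plus the number of α-vertices plus the
number of β-pairs. -/
def effSize (t : ExoticTree) : ℕ := 1 + t.numAlpha + t.numPairs

/-- The edge grading `𝔩(τ) = |τ| − 1`. -/
def edgeCount (t : ExoticTree) : ℕ := t.effSize - 1

/-- Isomorphism of exotic coloured trees: a root-preserving bijection of the vertices
commuting with the parent maps and preserving colours and the β-pairings. -/
def Iso (t₁ t₂ : ExoticTree) : Prop :=
  ∃ e : Fin (t₁.n + 1) ≃ Fin (t₂.n + 1), e 0 = 0 ∧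
    (∀ v, t₂.parent (e v) = e (t₁.parent v)) ∧
    (∀ v, t₂.colour (e v) = t₁.colour v) ∧
    (∀ v, t₂.mate (e v) = e (t₁.mate v))

/-- The symmetry factor `σₑ(τ)`: the order of the group of automorphisms (root-preserving
tree automorphisms preserving colours and mapping paired β-vertices to paired
β-vertices). -/
noncomputable def sigmaE (t : ExoticTree) : ℕ :=
  Nat.card {g : Equiv.Perm (Fin (t.n + 1)) //
    g 0 = 0 ∧ (∀ v, t.parent (g v) = g (t.parent v)) ∧
    (∀ v, t.colour (g v) = t.colour v) ∧ (∀ v, t.mate (g v) = g (t.mate v))}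


/-- `t'` is (a copy of) the exotic coloured tree `•_α ↷_v t` obtained from `t` by
grafting a single new α-leaf onto the vertex `v`. -/
def IsAlphaGraft (t : ExoticTree) (v : Fin (t.n + 1)) (t' : ExoticTree) : Prop :=
  t'.n = t.n + 1 ∧
  ∃ e : Fin (t.n + 1) ↪ Fin (t'.n + 1), e 0 = 0 ∧
    (∀ w, t'.colour (e w) = t.colour w) ∧
    (∀ w, t'.parent (e w) = e (t.parent w)) ∧
    (∀ w, t'.mate (e w) = e (t.mate w)) ∧
    ∀ u, u ∉ Set.range e →
      t'.colour u = some XColour.alpha ∧ t'.parent u = e v ∧ t'.mate u = u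

/-- `t'` is (a copy of) the exotic coloured tree `•• ↷_{v,w} t` obtained from `t` by
the simultaneous grafting of two new β-leaves, paired with each other, onto the
vertices `v` and `w` (possibly `v = w`). -/
def IsBetaPairGraft (t : ExoticTree) (v w : Fin (t.n + 1)) (t' : ExoticTree) : Prop :=
  t'.n = t.n + 2 ∧
  ∃ e : Fin (t.n + 1) ↪ Fin (t'.n + 1), e 0 = 0 ∧
    (∀ u, t'.colour (e u) = t.colour u) ∧
    (∀ u, t'.parent (e u) = e (t.parent u)) ∧
    (∀ u, t'.mate (e u) = e (t.mate u)) ∧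
    ∃ u₁ u₂ : Fin (t'.n + 1), u₁ ∉ Set.range e ∧ u₂ ∉ Set.range e ∧ u₁ ≠ u₂ ∧
      t'.colour u₁ = some XColour.beta ∧ t'.colour u₂ = some XColour.beta ∧
      t'.parent u₁ = e v ∧ t'.parent u₂ = e w ∧ t'.mate u₁ = u₂

end ExoticTree

open ExoticTree

/-- The elementary differential `Υ(τ)(x) = f^{(n₀)}(x)·∏_{v α-vertex} α^{(𝔫(v))}(x)·
∏_{v β-vertex} β^{(𝔫(v))}(x)`, where `n₀` is the number of children of the root. -/
noncomputable def elemDiff (a b f : ℝ → ℝ) (t : ExoticTree) (x : ℝ) : ℝ :=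
  iteratedDeriv (t.nChildren 0) f x *
    (∏ v ∈ Finset.univ.filter fun v : Fin (t.n + 1) => t.colour v = some XColour.alpha,
      iteratedDeriv (t.nChildren v) a x) *
    ∏ v ∈ Finset.univ.filter fun v : Fin (t.n + 1) => t.colour v = some XColour.beta,
      iteratedDeriv (t.nChildren v) b x


open scoped Classical

namespace StmtFour

variable (a b f : ℝ → ℝ)

/-- The function attached to a vertex by its colour. -/
noncomputable def cf (t : ExoticTree) (v : Fin (t.n + 1)) : ℝ → ℝ :=
  if t.colour v = some XColour.alpha then a
  else if t.colour v = some XColour.beta then b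
  else f

lemma cf_alpha {t : ExoticTree} {v : Fin (t.n + 1)} (h : t.colour v = some XColour.alpha) :
    cf a b f t v = a := by simp [cf, h]

lemma cf_beta {t : ExoticTree} {v : Fin (t.n + 1)} (h : t.colour v = some XColour.beta) :
    cf a b f t v = b := by simp [cf, h]

lemma cf_none {t : ExoticTree} {v : Fin (t.n + 1)} (h : t.colour v = none) :
    cf a b f t v = f := by simp [cf, h]

lemma cf_congr {t t' : ExoticTree} {v : Fin (t.n + 1)} {v' : Fin (t'.n + 1)}
    (h : t'.colour v' = t.colour v) : cf a b f t' v' = cf a b f t v := by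
  simp only [cf, h]

lemma cf_smooth (ha : ContDiff ℝ (⊤ : ℕ∞) a) (hb : ContDiff ℝ (⊤ : ℕ∞) b) (hf : ContDiff ℝ (⊤ : ℕ∞) f)
    (t : ExoticTree) (v : Fin (t.n + 1)) : ContDiff ℝ (⊤ : ℕ∞) (cf a b f t v) := by
  unfold cf; split_ifs <;> assumption

/-- Generic elementary-differential-like product with arbitrary derivative orders. -/
noncomputable def Q (t : ExoticTree) (m : Fin (t.n + 1) → ℕ) (x : ℝ) : ℝ :=
  ∏ v, iteratedDeriv (m v) (cf a b f t v) x

/-- Raise the order at one vertex by one. -/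
def bump {k : ℕ} (m : Fin k → ℕ) (v : Fin k) : Fin k → ℕ :=
  fun w => m w + if w = v then 1 else 0

lemma elemDiff_eq_Q (t : ExoticTree) (x : ℝ) :
    elemDiff a b f t x = Q a b f t t.nChildren x := by
  unfold elemDiff Q
  rw [← Finset.prod_filter_mul_prod_filter_not Finset.univ (fun v => t.colour v = none)
      (fun v => iteratedDeriv (t.nChildren v) (cf a b f t v) x)]
  rw [← Finset.prod_filter_mul_prod_filter_not
      (Finset.univ.filter fun v => ¬t.colour v = none)
      (fun v => t.colour v = some XColour.alpha)
      (fun v => iteratedDeriv (t.nChildren v) (cf a b f t v) x)]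
  rw [Finset.filter_filter, Finset.filter_filter]
  have h0 : (Finset.univ.filter fun v : Fin (t.n + 1) => t.colour v = none) = {0} := by
    ext v
    simp only [Finset.mem_filter, Finset.mem_univ, true_and, Finset.mem_singleton]
    constructor
    · intro h; by_contra hv; exact t.colour_nonroot v hv h
    · rintro rfl; exact t.colour_root
  have hA : (Finset.univ.filter fun v : Fin (t.n + 1) =>
      ¬t.colour v = none ∧ t.colour v = some XColour.alpha)
      = Finset.univ.filter fun v => t.colour v = some XColour.alpha := by
    ext v
    simp only [Finset.mem_filter, Finset.mem_univ, true_and]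
    exact ⟨fun h => h.2, fun h => ⟨by simp [h], h⟩⟩
  have hB : (Finset.univ.filter fun v : Fin (t.n + 1) =>
      ¬t.colour v = none ∧ ¬t.colour v = some XColour.alpha)
      = Finset.univ.filter fun v => t.colour v = some XColour.beta := by
    ext v
    simp only [Finset.mem_filter, Finset.mem_univ, true_and]
    constructor
    · rintro ⟨h1, h2⟩
      rcases hc : t.colour v with _ | c
      · exact absurd hc h1
      · cases c
        · exact absurd hc h2
        · rfl
    · intro h; exact ⟨by simp [h], by simp [h]⟩
  rw [h0, hA, hB, Finset.prod_singleton, cf_none a b f t.colour_root, mul_assoc]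
  congr 1
  congr 1
  · exact Finset.prod_congr rfl fun v hv => by
      rw [cf_alpha a b f (Finset.mem_filter.mp hv).2]
  · exact Finset.prod_congr rfl fun v hv => by
      rw [cf_beta a b f (Finset.mem_filter.mp hv).2]

lemma hasDerivAt_iteratedDeriv {g : ℝ → ℝ} (hg : ContDiff ℝ (⊤ : ℕ∞) g) (k : ℕ) (x : ℝ) :
    HasDerivAt (iteratedDeriv k g) (iteratedDeriv (k + 1) g x) x := by
  rw [iteratedDeriv_succ]
  exact ((hg.differentiable_iteratedDeriv k (by exact_mod_cast ENat.coe_lt_top k)) x).hasDerivAt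

lemma hasDerivAt_Q (ha : ContDiff ℝ (⊤ : ℕ∞) a) (hb : ContDiff ℝ (⊤ : ℕ∞) b) (hf : ContDiff ℝ (⊤ : ℕ∞) f)
    (t : ExoticTree) (m : Fin (t.n + 1) → ℕ) (x : ℝ) :
    HasDerivAt (fun y => Q a b f t m y) (∑ v, Q a b f t (bump m v) x) x := by
  have h := HasDerivAt.fun_finsetProd (u := (Finset.univ : Finset (Fin (t.n + 1))))
    (f := fun v y => iteratedDeriv (m v) (cf a b f t v) y)
    (f' := fun v => iteratedDeriv (m v + 1) (cf a b f t v) x)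
    (x := x)
    (fun v _ => hasDerivAt_iteratedDeriv (cf_smooth a b f ha hb hf t v) (m v) x)
  have hsum : (∑ v, Q a b f t (bump m v) x)
      = ∑ i, (∏ j ∈ Finset.univ.erase i, iteratedDeriv (m j) (cf a b f t j) x)
          • iteratedDeriv (m i + 1) (cf a b f t i) x := by
    refine Finset.sum_congr rfl fun v _ => ?_
    rw [smul_eq_mul, mul_comm]
    unfold Q bump
    rw [← Finset.mul_prod_erase _ _ (Finset.mem_univ v), if_pos rfl]
    congr 1
    refine Finset.prod_congr rfl fun w hw => ?_
    rw [if_neg (Finset.mem_erase.mp hw).1, add_zero]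
  rw [hsum]
  exact h

lemma nChildren_eq_zero {t' : ExoticTree} {u : Fin (t'.n + 1)}
    (h : ∀ z, t'.parent z = u → z = u) : t'.nChildren u = 0 := by
  unfold ExoticTree.nChildren
  rw [Finset.card_eq_zero]
  ext z
  simp only [Finset.mem_filter, Finset.mem_univ, true_and, Finset.notMem_empty, iff_false,
    not_and]
  intro h1 h2
  exact h2 (h z h1)

lemma nChildren_emb (t t' : ExoticTree) (e : Fin (t.n + 1) ↪ Fin (t'.n + 1))
    (hpar : ∀ u, t'.parent (e u) = e (t.parent u)) (y : Fin (t.n + 1)) :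
    t'.nChildren (e y) = t.nChildren y
      + (Finset.univ.filter fun z => z ∉ Set.range e ∧ t'.parent z = e y).card := by
  unfold ExoticTree.nChildren
  have hset : (Finset.univ.filter fun z => t'.parent z = e y ∧ z ≠ e y)
      = ((Finset.univ.filter fun w => t.parent w = y ∧ w ≠ y).map e)
        ∪ (Finset.univ.filter fun z => z ∉ Set.range e ∧ t'.parent z = e y) := by
    ext z
    simp only [Finset.mem_filter, Finset.mem_univ, true_and, Finset.mem_union, Finset.mem_map]
    constructor
    · rintro ⟨hpz, hz⟩
      by_cases hr : z ∈ Set.range e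
      · obtain ⟨w, rfl⟩ := hr
        left
        exact ⟨w, ⟨e.injective ((hpar w).symm.trans hpz),
          fun hh => hz (by rw [hh])⟩, rfl⟩
      · right; exact ⟨hr, hpz⟩
    · rintro (⟨w, ⟨hw1, hw2⟩, rfl⟩ | ⟨hr, hpz⟩)
      · exact ⟨by rw [hpar, hw1], fun hh => hw2 (e.injective hh)⟩
      · exact ⟨hpz, fun hh => hr ⟨y, hh.symm⟩⟩
  have hdisj : Disjoint ((Finset.univ.filter fun w => t.parent w = y ∧ w ≠ y).map e)
      (Finset.univ.filter fun z => z ∉ Set.range e ∧ t'.parent z = e y) := by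
    rw [Finset.disjoint_left]
    intro z hz1 hz2
    obtain ⟨w, -, rfl⟩ := Finset.mem_map.mp hz1
    exact ((Finset.mem_filter.mp hz2).2).1 ⟨w, rfl⟩
  rw [hset, Finset.card_union_of_disjoint hdisj, Finset.card_map]

lemma elemDiff_alphaGraft (t : ExoticTree) (v : Fin (t.n + 1)) (t' : ExoticTree)
    (h : t.IsAlphaGraft v t') (x : ℝ) :
    elemDiff a b f t' x = a x * Q a b f t (bump t.nChildren v) x := by
  obtain ⟨hn, e, he0, hcol, hpar, hmate, hnew⟩ := h
  rw [elemDiff_eq_Q]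
  have hcard : (Finset.univ \ Finset.univ.map e).card = 1 := by
    rw [Finset.card_sdiff_of_subset (Finset.subset_univ _), Finset.card_map]
    simp [hn]
  obtain ⟨u, hu⟩ := Finset.card_eq_one.mp hcard
  have hmemC : ∀ z : Fin (t'.n + 1), z ∉ Set.range e ↔ z = u := by
    intro z
    rw [← Finset.mem_singleton, ← hu, Finset.mem_sdiff]
    simp only [Finset.mem_univ, true_and, Finset.mem_map, Set.mem_range,
      not_exists]
  have hunr : u ∉ Set.range e := (hmemC u).mpr rfl
  obtain ⟨hucol, hupar, -⟩ := hnew u hunr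
  have huleaf : t'.nChildren u = 0 := by
    apply nChildren_eq_zero
    intro z hz
    by_cases hzr : z ∈ Set.range e
    · obtain ⟨y, rfl⟩ := hzr
      exact absurd ((hpar y).symm.trans hz) (fun hh => hunr ⟨_, hh⟩)
    · exact (hmemC z).mp hzr
  unfold Q
  rw [← Finset.prod_sdiff (Finset.subset_univ (Finset.univ.map e)), hu,
    Finset.prod_singleton, Finset.prod_map, huleaf, cf_alpha a b f hucol, iteratedDeriv_zero]
  congr 1
  refine Finset.prod_congr rfl fun w _ => ?_
  rw [cf_congr a b f (hcol w)]
  have hcnt : t'.nChildren (e w) = bump t.nChildren v w := by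
    rw [nChildren_emb t t' e hpar w]
    unfold bump
    congr 1
    by_cases hwv : w = v
    · subst hwv
      rw [if_pos rfl]
      have hfil : (Finset.univ.filter fun z => z ∉ Set.range e ∧ t'.parent z = e w) = {u} := by
        ext z
        simp only [Finset.mem_filter, Finset.mem_univ, true_and, Finset.mem_singleton]
        constructor
        · rintro ⟨h1, -⟩; exact (hmemC z).mp h1
        · rintro rfl; exact ⟨hunr, hupar⟩
      rw [hfil, Finset.card_singleton]
    · rw [if_neg hwv, Finset.card_eq_zero]
      ext z
      simp only [Finset.mem_filter, Finset.mem_univ, true_and, Finset.notMem_empty, iff_false,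
        not_and]
      intro h1 h2
      have hz : z = u := (hmemC z).mp h1
      subst hz
      exact hwv (e.injective (hupar.symm.trans h2)).symm
  rw [hcnt]

lemma elemDiff_betaGraft (t : ExoticTree) (v w : Fin (t.n + 1)) (t' : ExoticTree)
    (h : t.IsBetaPairGraft v w t') (x : ℝ) :
    elemDiff a b f t' x = b x ^ 2 * Q a b f t (bump (bump t.nChildren v) w) x := by
  obtain ⟨hn, e, he0, hcol, hpar, hmate, u₁, u₂, hu₁r, hu₂r, hne, hc₁, hc₂, hp₁, hp₂, -⟩ := h
  rw [elemDiff_eq_Q]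
  have hnotmap : ∀ z : Fin (t'.n + 1), z ∉ Set.range e → z ∉ Finset.univ.map e := by
    intro z hz hm
    obtain ⟨y, -, hy⟩ := Finset.mem_map.mp hm
    exact hz ⟨y, hy⟩
  have hcard : (Finset.univ \ Finset.univ.map e).card = 2 := by
    rw [Finset.card_sdiff_of_subset (Finset.subset_univ _), Finset.card_map]
    simp [hn]
  have hCeq : ({u₁, u₂} : Finset (Fin (t'.n + 1))) = Finset.univ \ Finset.univ.map e := by
    apply Finset.eq_of_subset_of_card_le
    · intro z hz
      rw [Finset.mem_sdiff]
      rcases Finset.mem_insert.mp hz with rfl | hz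
      · exact ⟨Finset.mem_univ _, hnotmap _ hu₁r⟩
      · rw [Finset.mem_singleton] at hz
        subst hz
        exact ⟨Finset.mem_univ _, hnotmap _ hu₂r⟩
    · rw [hcard, Finset.card_pair hne]
  have hmemC : ∀ z : Fin (t'.n + 1), z ∉ Set.range e ↔ (z = u₁ ∨ z = u₂) := by
    intro z
    constructor
    · intro hz
      have : z ∈ ({u₁, u₂} : Finset (Fin (t'.n + 1))) := by
        rw [hCeq, Finset.mem_sdiff]
        exact ⟨Finset.mem_univ _, hnotmap _ hz⟩
      simpa using this
    · rintro (rfl | rfl)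
      · exact hu₁r
      · exact hu₂r
  have hleaf : ∀ u0 : Fin (t'.n + 1), u0 ∉ Set.range e → t'.nChildren u0 = 0 := by
    intro u0 hu0
    apply nChildren_eq_zero
    intro z hz
    by_cases hzr : z ∈ Set.range e
    · obtain ⟨y, rfl⟩ := hzr
      exact absurd ((hpar y).symm.trans hz) (fun hh => hu0 ⟨_, hh⟩)
    · rcases (hmemC z).mp hzr with rfl | rfl
      · exact absurd (hp₁.symm.trans hz) (fun hh => hu0 ⟨_, hh⟩)
      · exact absurd (hp₂.symm.trans hz) (fun hh => hu0 ⟨_, hh⟩)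
  unfold Q
  rw [← Finset.prod_sdiff (Finset.subset_univ (Finset.univ.map e)), ← hCeq,
    Finset.prod_insert (by simp [hne]), Finset.prod_singleton, Finset.prod_map,
    hleaf u₁ hu₁r, hleaf u₂ hu₂r, cf_beta a b f hc₁, cf_beta a b f hc₂, iteratedDeriv_zero]
  rw [← sq]
  congr 1
  refine Finset.prod_congr rfl fun y _ => ?_
  rw [cf_congr a b f (hcol y)]
  have e1 : (t'.parent u₁ = e y) ↔ y = v := by
    rw [hp₁]
    exact ⟨fun h => (e.injective h).symm, fun h => by rw [h]⟩
  have e2 : (t'.parent u₂ = e y) ↔ y = w := by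
    rw [hp₂]
    exact ⟨fun h => (e.injective h).symm, fun h => by rw [h]⟩
  have hcnt : t'.nChildren (e y) = bump (bump t.nChildren v) w y := by
    rw [nChildren_emb t t' e hpar y]
    have hfe : (Finset.univ.filter fun z => z ∉ Set.range e ∧ t'.parent z = e y)
        = ({u₁, u₂} : Finset (Fin (t'.n + 1))).filter fun z => t'.parent z = e y := by
      ext z
      simp only [Finset.mem_filter, Finset.mem_univ, true_and, Finset.mem_insert,
        Finset.mem_singleton]
      exact ⟨fun ⟨h1, h2⟩ => ⟨(hmemC z).mp h1, h2⟩, fun ⟨h1, h2⟩ => ⟨(hmemC z).mpr h1, h2⟩⟩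
    rw [hfe, Finset.filter_insert, Finset.filter_singleton]
    unfold bump
    simp only [e1, e2]
    by_cases hyv : y = v <;> by_cases hyw : y = w
    · subst hyv; subst hyw
      simp [Finset.card_pair hne]
    · subst hyv
      simp [hyw]
    · subst hyw
      simp [hyv]
    · simp [hyv, hyw]
  rw [hcnt]

end StmtFour

open StmtFour in
/-- For smooth `α, β, f : ℝ → ℝ` and the operator
`(Lg)(x) = α(x)g'(x) + ½β(x)²g''(x)`, and every exotic coloured tree `τ`,
`L Υ(τ) = Υ(•_α↷τ) + ½ Υ(••↷τ)`, where `•_α↷τ = Σ_{v} •_α↷_v τ` and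
`••↷τ = Σ_{v,w} ••↷_{v,w} τ` and `Υ` is extended linearly. -/
theorem stmt4 (a b f : ℝ → ℝ)
    (ha : ContDiff ℝ (⊤ : ℕ∞) a) (hb : ContDiff ℝ (⊤ : ℕ∞) b) (hf : ContDiff ℝ (⊤ : ℕ∞) f)
    (t : ExoticTree)
    (gα : Fin (t.n + 1) → ExoticTree)
    (hgα : ∀ v, t.IsAlphaGraft v (gα v))
    (gβ : Fin (t.n + 1) → Fin (t.n + 1) → ExoticTree)
    (hgβ : ∀ v w, t.IsBetaPairGraft v w (gβ v w))
    (x : ℝ) :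
    a x * deriv (elemDiff a b f t) x
        + (1 / 2) * (b x) ^ 2 * iteratedDeriv 2 (elemDiff a b f t) x
      = (∑ v : Fin (t.n + 1), elemDiff a b f (gα v) x)
        + (1 / 2) * ∑ v : Fin (t.n + 1), ∑ w : Fin (t.n + 1), elemDiff a b f (gβ v w) x := by
  have hE : elemDiff a b f t = fun y => Q a b f t t.nChildren y :=
    funext (elemDiff_eq_Q a b f t)
  have hd1 : deriv (fun y => Q a b f t t.nChildren y) x
      = ∑ v, Q a b f t (bump t.nChildren v) x :=
    (hasDerivAt_Q a b f ha hb hf t t.nChildren x).deriv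
  have hd2 : iteratedDeriv 2 (fun y => Q a b f t t.nChildren y) x
      = ∑ v, ∑ w, Q a b f t (bump (bump t.nChildren v) w) x := by
    have hfun : deriv (fun y => Q a b f t t.nChildren y)
        = fun y => ∑ v, Q a b f t (bump t.nChildren v) y :=
      funext fun y => (hasDerivAt_Q a b f ha hb hf t t.nChildren y).deriv
    rw [show (2 : ℕ) = 1 + 1 from rfl, iteratedDeriv_succ, iteratedDeriv_one, hfun]
    exact (HasDerivAt.fun_sum fun v _ =>
      hasDerivAt_Q a b f ha hb hf t (bump t.nChildren v) x).deriv
  have hR1 : ∑ v, elemDiff a b f (gα v) x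
      = a x * ∑ v, Q a b f t (bump t.nChildren v) x := by
    rw [Finset.mul_sum]
    exact Finset.sum_congr rfl fun v _ => elemDiff_alphaGraft a b f t v _ (hgα v) x
  have hR2 : ∑ v, ∑ w, elemDiff a b f (gβ v w) x
      = b x ^ 2 * ∑ v, ∑ w, Q a b f t (bump (bump t.nChildren v) w) x := by
    rw [Finset.mul_sum]
    refine Finset.sum_congr rfl fun v _ => ?_
    rw [Finset.mul_sum]
    exact Finset.sum_congr rfl fun w _ => elemDiff_betaGraft a b f t v w _ (hgβ v w) x
  rw [hE, hd1, hd2, hR1, hR2]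
  ring
end

section
/- Let τ be an exotic coloured tree with effective size |τ| > 1. Then |τ|!/τ! = Σ_{τ' ∈ R_e⁻(τ)} |τ'|!/τ'!, where the sum runs (with multiplicity) over the family R_e⁻(τ) of trees obtained from τ by removing one effective edge at the root. -/
namespace ExoticTree

/-- A tree is monotonically labelled (by creation order) if every non-root vertex is
larger than its parent. -/
def IsMonotoneLabelled (t : ExoticTree) : Prop :=
  ∀ v : Fin (t.n + 1), v ≠ 0 → t.parent v < v

/-- The two members of each β-pair carry consecutive labels (they are created by
consecutive grafting steps). -/
def PairsConsecutive (t : ExoticTree) : Prop :=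
  ∀ v, t.colour v = some XColour.beta →
    ((t.mate v : ℕ) = (v : ℕ) + 1 ∨ (v : ℕ) = (t.mate v : ℕ) + 1)

/-- The number of natural-growth sequences producing `t`.  A natural-growth sequence
(starting from the single-root tree, grafting single α-leaves and simultaneous pairs
of paired β-leaves) is recorded by the tree labelled by creation order — an α-leaf is
created in one step and the two paired β-leaves of one simultaneous grafting occupy
two consecutive labels — together with, for each β-pair, the datum of which of its
two leaves was attached to which of the two (ordered) chosen attachment vertices. -/
noncomputable def numGrowthSeq (t : ExoticTree) : ℕ :=
  2 ^ t.numPairs *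
    Nat.card {s : ExoticTree // s.IsMonotoneLabelled ∧ s.PairsConsecutive ∧ Iso s t}

/-- The exotic Connes–Moscovici weight `CM^e(τ)`: the number of natural-growth
sequences producing `τ`, multiplied by `2^{−(number of β-vertices of τ)}`. -/
noncomputable def CMe (t : ExoticTree) : ℚ :=
  (t.numGrowthSeq : ℚ) / 2 ^ t.numBeta

/-- The α-leaves of `t`. -/
def alphaLeaves (t : ExoticTree) : Finset (Fin (t.n + 1)) :=
  Finset.univ.filter fun v =>
    t.colour v = some XColour.alpha ∧ ∀ w, t.parent w = v → w = v

/-- The β-pairs both of whose members are leaves (each pair represented by its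
smaller member). -/
def betaLeafPairs (t : ExoticTree) : Finset (Fin (t.n + 1)) :=
  Finset.univ.filter fun v =>
    t.colour v = some XColour.beta ∧ v < t.mate v ∧
    (∀ w, t.parent w = v → w = v) ∧ (∀ w, t.parent w = t.mate v → w = t.mate v)

/-- `t'` is (a copy of) the exotic coloured tree obtained from `t` by removing the
α-leaf `ℓ` together with its edge. -/
def IsAlphaLeafRemoval (t : ExoticTree) (ℓ : Fin (t.n + 1)) (t' : ExoticTree) : Prop :=
  t.colour ℓ = some XColour.alpha ∧ t.IsLeaf ℓ ∧
  ∃ e : Fin (t'.n + 1) ↪ Fin (t.n + 1), e 0 = 0 ∧ Set.range e = {u | u ≠ ℓ} ∧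
    (∀ w, t.colour (e w) = t'.colour w) ∧
    (∀ w, t.parent (e w) = e (t'.parent w)) ∧
    (∀ w, t.mate (e w) = e (t'.mate w))

/-- `t'` is (a copy of) the exotic coloured tree obtained from `t` by removing the
paired couple of β-leaves `v`, `mate v` together with their edges. -/
def IsBetaPairLeafRemoval (t : ExoticTree) (v : Fin (t.n + 1)) (t' : ExoticTree) : Prop :=
  t.colour v = some XColour.beta ∧ t.IsLeaf v ∧ t.IsLeaf (t.mate v) ∧
  ∃ e : Fin (t'.n + 1) ↪ Fin (t.n + 1), e 0 = 0 ∧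
    Set.range e = {u | u ≠ v ∧ u ≠ t.mate v} ∧
    (∀ w, t.colour (e w) = t'.colour w) ∧
    (∀ w, t.parent (e w) = e (t'.parent w)) ∧
    (∀ w, t.mate (e w) = e (t'.mate w))

/-- The defining property of the exotic tree factorial `τ!`:
`•! = 1` for the single-root tree, and the recursion
`|τ|/τ! = Σ_{τ' ∈ T_e⁻(τ)} 1/τ'!`, where `T_e⁻(τ)` consists of the exotic coloured
trees obtained from `τ` by removing one α-leaf or one paired couple of β-leaves
(together with their edges). -/
def IsTreeFactorial (fac : ExoticTree → ℚ) : Prop :=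
  (∀ t : ExoticTree, t.n = 0 → fac t = 1) ∧
  ∀ t : ExoticTree, 0 < t.n →
    ∀ (rα : (ℓ : Fin (t.n + 1)) → ℓ ∈ t.alphaLeaves → ExoticTree)
      (rβ : (v : Fin (t.n + 1)) → v ∈ t.betaLeafPairs → ExoticTree),
      (∀ ℓ h, t.IsAlphaLeafRemoval ℓ (rα ℓ h)) →
      (∀ v h, t.IsBetaPairLeafRemoval v (rβ v h)) →
      (t.effSize : ℚ) / fac t =
        (∑ ℓ ∈ t.alphaLeaves.attach, 1 / fac (rα ℓ.1 ℓ.2)) +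
        ∑ v ∈ t.betaLeafPairs.attach, 1 / fac (rβ v.1 v.2)


/-- The α-vertices that are children of the root (effective α-edges at the root). -/
def rootAlphaChildren (t : ExoticTree) : Finset (Fin (t.n + 1)) :=
  Finset.univ.filter fun v =>
    t.colour v = some XColour.alpha ∧ t.parent v = 0 ∧ v ≠ 0

/-- The β-pairs both of whose members are children of the root (effective β-edges at
the root; each pair represented by its smaller member). -/
def rootBetaPairs (t : ExoticTree) : Finset (Fin (t.n + 1)) :=
  Finset.univ.filter fun v =>
    t.colour v = some XColour.beta ∧ v < t.mate v ∧
    t.parent v = 0 ∧ t.parent (t.mate v) = 0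

/-- `t'` is (a copy of) the tree obtained from `t` by removing the effective edge at
the root below the α-vertex `v` (a child of the root): `v` is deleted and its
children are attached to the root. -/
def IsRootAlphaContraction (t : ExoticTree) (v : Fin (t.n + 1)) (t' : ExoticTree) : Prop :=
  t.colour v = some XColour.alpha ∧ t.parent v = 0 ∧
  ∃ e : Fin (t'.n + 1) ↪ Fin (t.n + 1), e 0 = 0 ∧ Set.range e = {u | u ≠ v} ∧
    (∀ w, t.colour (e w) = t'.colour w) ∧
    (∀ w, t.mate (e w) = e (t'.mate w)) ∧
    ∀ w, (t.parent (e w) = v → t'.parent w = 0) ∧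
      (t.parent (e w) ≠ v → e (t'.parent w) = t.parent (e w))

/-- `t'` is (a copy of) the tree obtained from `t` by removing the effective double
edge at the root below the β-pair `v`, `mate v` (both children of the root): both
β-vertices are deleted and all their children are attached to the root. -/
def IsRootBetaPairContraction (t : ExoticTree) (v : Fin (t.n + 1)) (t' : ExoticTree) : Prop :=
  t.colour v = some XColour.beta ∧ t.parent v = 0 ∧ t.parent (t.mate v) = 0 ∧
  ∃ e : Fin (t'.n + 1) ↪ Fin (t.n + 1), e 0 = 0 ∧
    Set.range e = {u | u ≠ v ∧ u ≠ t.mate v} ∧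
    (∀ w, t.colour (e w) = t'.colour w) ∧
    (∀ w, t.mate (e w) = e (t'.mate w)) ∧
    ∀ w, ((t.parent (e w) = v ∨ t.parent (e w) = t.mate v) → t'.parent w = 0) ∧
      (¬(t.parent (e w) = v ∨ t.parent (e w) = t.mate v) →
        e (t'.parent w) = t.parent (e w))

end ExoticTree

/-!
Call a block of `τ` an α-vertex or a β-pair, and write `τ ∖ B` for `τ` with the block `B`
deleted and the children of its vertices re-attached to the root. Both `T_e⁻(τ)` (for leaf
blocks) and `R_e⁻(τ)` (for blocks hanging from the root) consist of such trees, and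
`|τ ∖ B| = |τ| - 1`. Since `|τ|! = (|τ| - 1)! · |τ|`, the claim becomes
`|τ| / τ! = Σ_B 1 / (τ ∖ B)!` over the root blocks `B`, proved by strong induction on `|τ|`.

When `|τ| = 2` the only block is both a leaf block and a root block, and this is the defining
recursion. Otherwise multiply by `|τ| - 1`. On the left the recursion gives
`Σ_L |τ ∖ L| / (τ ∖ L)!` over the leaf blocks `L`, and the induction hypothesis expands each term
over the root blocks of `τ ∖ L`, which are the root blocks of `τ` other than `L`. On the right,
the recursion expands each `|τ ∖ B| / (τ ∖ B)!` over the leaf blocks of `τ ∖ B`, which are the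
leaf blocks of `τ` other than `B`. Both sides become `Σ 1 / (τ ∖ (L ∪ B))!` over pairs of a
leaf block and a distinct root block, because the order of two deletions only matters up to
isomorphism. The recursion also forces `τ!` to be an isomorphism invariant.
-/

lemma Function.iterate_card_sub_one_eq_of_forall_exists {α : Type*} [Fintype α]
    {f : α → α} {a : α} (ha : f a = a) (h : ∀ x, ∃ k, f^[k] x = a) (x : α) :
    f^[Fintype.card α - 1] x = a := by
  classical
  have hstay : ∀ y m k, f^[k] y = a → k ≤ m → f^[m] y = a := fun y m k hk hkm => by
    rw [← Nat.sub_add_cancel hkm, Function.iterate_add_apply, hk, Function.iterate_fixed ha]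
  obtain ⟨n, hn, hstab⟩ := Finset.image_iterate_stabilises_lt_card
    (s := Finset.univ) (f := f) (fun _ _ => Finset.mem_univ _) ⟨x, Finset.mem_univ x⟩
  choose k hk using h
  set K := max n (Finset.univ.sup k)
  have hx : f^[n] x ∈ Finset.univ.image f^[K] := by
    rw [hstab K (le_max_left _ _)]
    exact Finset.mem_image_of_mem _ (Finset.mem_univ x)
  obtain ⟨y, -, hy⟩ := Finset.mem_image.mp hx
  have hxn : f^[n] x = a :=
    hy ▸ hstay y K _ (hk y) ((Finset.le_sup (Finset.mem_univ y)).trans (le_max_right _ _))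
  exact hstay x _ n hxn (by rw [Finset.card_univ] at hn; omega)

namespace ExoticTree

variable {t t' t₁ t₂ r : ExoticTree}

@[simp]
lemma mate_mate (t : ExoticTree) (u : Fin (t.n + 1)) : t.mate (t.mate u) = u := by
  by_cases h : t.colour u = some XColour.beta
  · exact (t.mate_beta u h).2.1
  · rw [t.mate_nonbeta u h, t.mate_nonbeta u h]

lemma mate_injective (t : ExoticTree) : Function.Injective t.mate :=
  Function.LeftInverse.injective t.mate_mate

lemma ne_zero_of_colour_eq_some {v : Fin (t.n + 1)} {c : XColour} (hv : t.colour v = some c) :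
    v ≠ 0 := by
  rintro rfl
  simp [t.colour_root] at hv

lemma mate_eq_self_of_colour_alpha {v : Fin (t.n + 1)} (hv : t.colour v = some .alpha) :
    t.mate v = v :=
  t.mate_nonbeta v (by simp [hv])

@[simp]
lemma mate_zero (t : ExoticTree) : t.mate 0 = 0 :=
  t.mate_nonbeta 0 (by simp [t.colour_root])

@[simp]
lemma mate_eq_zero_iff {v : Fin (t.n + 1)} : t.mate v = 0 ↔ v = 0 := by
  rw [← t.mate_injective.eq_iff, mate_mate, mate_zero, eq_comm]

/-- `{v}` for an α-vertex and the β-pair of `v` for a β-vertex, since `mate v = v` off the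
β-vertices. -/
def block (t : ExoticTree) (v : Fin (t.n + 1)) : Finset (Fin (t.n + 1)) := {v, t.mate v}

lemma mem_block {u v : Fin (t.n + 1)} : u ∈ t.block v ↔ u = v ∨ u = t.mate v := by
  simp [block]

lemma mem_block_comm {u v : Fin (t.n + 1)} : u ∈ t.block v ↔ v ∈ t.block u := by
  simp only [mem_block]
  constructor <;> rintro (rfl | rfl) <;> simp

@[simp]
lemma block_mate (t : ExoticTree) (v : Fin (t.n + 1)) : t.block (t.mate v) = t.block v := by
  simp [block, Finset.pair_comm]

lemma zero_notMem_block {v : Fin (t.n + 1)} (hv : v ≠ 0) : 0 ∉ t.block v := by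
  rw [mem_block]
  rintro (h | h)
  · exact hv h.symm
  · exact hv (mate_eq_zero_iff.mp h.symm)

def rep (t : ExoticTree) (v : Fin (t.n + 1)) : Fin (t.n + 1) := min v (t.mate v)

lemma rep_mem_block (t : ExoticTree) (v : Fin (t.n + 1)) : t.rep v ∈ t.block v := by
  rcases min_choice v (t.mate v) with h | h <;> simp [rep, h, mem_block]

@[simp]
lemma rep_mate (t : ExoticTree) (v : Fin (t.n + 1)) : t.rep (t.mate v) = t.rep v := by
  simp [rep, min_comm]

lemma rep_eq_self {v : Fin (t.n + 1)} (hv : v ≤ t.mate v) : t.rep v = v :=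
  min_eq_left hv

lemma rep_le_mate_rep (t : ExoticTree) (v : Fin (t.n + 1)) : t.rep v ≤ t.mate (t.rep v) := by
  rcases le_total v (t.mate v) with h | h
  · rwa [rep_eq_self h]
  · rw [← rep_mate, rep_eq_self (by simpa using h), mate_mate]
    simpa using h

@[simp]
lemma block_rep (t : ExoticTree) (v : Fin (t.n + 1)) : t.block (t.rep v) = t.block v := by
  rcases mem_block.mp (t.rep_mem_block v) with h | h <;> simp [h]

lemma apply_rep_eq {M : Type*} {F : Fin (t.n + 1) → M} (hF : ∀ v, F (t.mate v) = F v)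
    (v : Fin (t.n + 1)) : F (t.rep v) = F v := by
  rcases mem_block.mp (t.rep_mem_block v) with h | h <;> simp [h, hF]

lemma rep_of_mem_block {u v : Fin (t.n + 1)} (h : u ∈ t.block v) : t.rep u = t.rep v := by
  rcases mem_block.mp h with rfl | rfl <;> simp

/-- One index per block satisfying `P`, its smaller member, as in `rootBetaPairs` and
`betaLeafPairs`. -/
def reps (t : ExoticTree) (P : Fin (t.n + 1) → Prop) [DecidablePred P] :
    Finset (Fin (t.n + 1)) :=
  Finset.univ.filter fun v => v ≠ 0 ∧ v ≤ t.mate v ∧ P v ∧ P (t.mate v)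

section reps
variable {P : Fin (t.n + 1) → Prop} [DecidablePred P]

lemma mem_reps {v : Fin (t.n + 1)} :
    v ∈ t.reps P ↔ v ≠ 0 ∧ v ≤ t.mate v ∧ P v ∧ P (t.mate v) := by
  simp [reps]

lemma mem_reps_iff_alpha_or_beta {v : Fin (t.n + 1)} :
    v ∈ t.reps P ↔ (t.colour v = some .alpha ∧ P v) ∨
      (t.colour v = some .beta ∧ v < t.mate v ∧ P v ∧ P (t.mate v)) := by
  rw [mem_reps]
  constructor
  · rintro ⟨hv0, hle, hP, hPm⟩
    rcases hc : t.colour v with _ | _ | _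
    · exact absurd hc (t.colour_nonroot v hv0)
    · exact Or.inl ⟨rfl, hP⟩
    · exact Or.inr ⟨rfl, hle.lt_of_ne (t.mate_beta v hc).2.2.symm, hP, hPm⟩
  · rintro (⟨hc, hP⟩ | ⟨hc, hlt, hP, hPm⟩)
    · have hm := mate_eq_self_of_colour_alpha hc
      exact ⟨ne_zero_of_colour_eq_some hc, hm.ge, hP, by rwa [hm]⟩
    · exact ⟨ne_zero_of_colour_eq_some hc, hlt.le, hP, hPm⟩

lemma reps_filter_mem_block {v : Fin (t.n + 1)} (hv : v ≠ 0) (hP : P v) (hPm : P (t.mate v)) :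
    (t.reps P).filter (· ∈ t.block v) = {t.rep v} := by
  ext u
  simp only [Finset.mem_filter, mem_reps, Finset.mem_singleton]
  constructor
  · rintro ⟨⟨-, hle, -⟩, hu⟩
    rw [← rep_of_mem_block hu, rep_eq_self hle]
  · rintro rfl
    have hmem := t.rep_mem_block v
    refine ⟨⟨?_, t.rep_le_mate_rep v, ?_⟩, hmem⟩
    · exact fun h => zero_notMem_block hv (h ▸ hmem)
    · rcases mem_block.mp hmem with h | h <;> rw [h] <;> simp [hP, hPm]

lemma rep_mem_reps {v : Fin (t.n + 1)} (hv : v ≠ 0) (hP : P v) (hPm : P (t.mate v)) :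
    t.rep v ∈ t.reps P := by
  have h := Finset.mem_singleton_self (t.rep v)
  rw [← reps_filter_mem_block hv hP hPm] at h
  exact (Finset.mem_filter.mp h).1

end reps

/-- Indexes `R_e⁻(τ)`. -/
def rootReps (t : ExoticTree) : Finset (Fin (t.n + 1)) := t.reps (t.parent · = 0)

/-- Indexes `T_e⁻(τ)`. -/
def leafReps (t : ExoticTree) : Finset (Fin (t.n + 1)) :=
  t.reps fun v => ∀ w, t.parent w = v → w = v

lemma rootReps_eq_union : t.rootReps = t.rootAlphaChildren ∪ t.rootBetaPairs := by
  ext v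
  simp only [rootReps, mem_reps_iff_alpha_or_beta, rootAlphaChildren, rootBetaPairs,
    Finset.mem_union, Finset.mem_filter, Finset.mem_univ, true_and]
  constructor
  · rintro (⟨hc, hp⟩ | h)
    · exact Or.inl ⟨hc, hp, ne_zero_of_colour_eq_some hc⟩
    · exact Or.inr h
  · rintro (⟨hc, hp, -⟩ | h)
    · exact Or.inl ⟨hc, hp⟩
    · exact Or.inr h

lemma leafReps_eq_union : t.leafReps = t.alphaLeaves ∪ t.betaLeafPairs := by
  ext v
  simp [leafReps, mem_reps_iff_alpha_or_beta, alphaLeaves, betaLeafPairs]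

/-- `e` exhibits `t'` as `t` with the vertices of `S` deleted and the children of deleted
vertices re-attached to the root. -/
structure IsDeletionVia (t : ExoticTree) (S : Finset (Fin (t.n + 1))) (t' : ExoticTree)
    (e : Fin (t'.n + 1) ↪ Fin (t.n + 1)) : Prop where
  map_zero : e 0 = 0
  range_eq : Set.range e = {u | u ∉ S}
  colour_apply : ∀ w, t.colour (e w) = t'.colour w
  mate_apply : ∀ w, t.mate (e w) = e (t'.mate w)
  parent_eq_zero : ∀ w, t.parent (e w) ∈ S → t'.parent w = 0
  apply_parent : ∀ w, t.parent (e w) ∉ S → e (t'.parent w) = t.parent (e w)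

def IsDeletion (t : ExoticTree) (S : Finset (Fin (t.n + 1))) (t' : ExoticTree) : Prop :=
  ∃ e, IsDeletionVia t S t' e

namespace IsDeletionVia

variable {S : Finset (Fin (t.n + 1))} {e : Fin (t'.n + 1) ↪ Fin (t.n + 1)}

lemma apply_notMem (h : IsDeletionVia t S t' e) (w : Fin (t'.n + 1)) : e w ∉ S := by
  have hw : e w ∈ Set.range e := ⟨w, rfl⟩
  rwa [h.range_eq] at hw

lemma exists_apply_eq (h : IsDeletionVia t S t' e) {u : Fin (t.n + 1)} (hu : u ∉ S) :
    ∃ w, e w = u := by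
  have hu' : u ∈ {u | u ∉ S} := hu
  rwa [← h.range_eq] at hu'

lemma apply_eq_zero_iff (h : IsDeletionVia t S t' e) {w : Fin (t'.n + 1)} :
    e w = 0 ↔ w = 0 := by
  rw [← h.map_zero, e.injective.eq_iff]

lemma zero_notMem (h : IsDeletionVia t S t' e) : (0 : Fin (t.n + 1)) ∉ S :=
  h.map_zero ▸ h.apply_notMem 0

lemma map_block (h : IsDeletionVia t S t' e) (w : Fin (t'.n + 1)) :
    (t'.block w).map e = t.block (e w) := by
  simp [block, h.mate_apply]

lemma trans {S' : Finset (Fin (t₁.n + 1))} {e₁ : Fin (t₁.n + 1) ↪ Fin (t.n + 1)}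
    {e₂ : Fin (t₂.n + 1) ↪ Fin (t₁.n + 1)} (h₁ : IsDeletionVia t S t₁ e₁)
    (h₂ : IsDeletionVia t₁ S' t₂ e₂) : IsDeletionVia t (S ∪ S'.map e₁) t₂ (e₂.trans e₁) := by
  have hmem : ∀ w, e₁ w ∉ S ∪ S'.map e₁ ↔ w ∉ S' := fun w => by
    simp [h₁.apply_notMem w]
  refine ⟨by simp [h₂.map_zero, h₁.map_zero], ?_, fun w => ?_, fun w => ?_, fun w hw => ?_,
    fun w hw => ?_⟩
  · ext u
    simp only [Function.Embedding.trans_apply, Set.mem_range, Set.mem_ofPred_eq]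
    constructor
    · rintro ⟨w, rfl⟩
      exact (hmem _).mpr (h₂.apply_notMem w)
    · intro hu
      obtain ⟨w₁, rfl⟩ := h₁.exists_apply_eq (fun hS => hu (Finset.mem_union_left _ hS))
      obtain ⟨w₂, rfl⟩ := h₂.exists_apply_eq ((hmem w₁).mp hu)
      exact ⟨w₂, rfl⟩
  · simp [h₁.colour_apply, h₂.colour_apply]
  · simp [h₁.mate_apply, h₂.mate_apply]
  · simp only [Function.Embedding.trans_apply] at hw ⊢
    by_cases hS : t.parent (e₁ (e₂ w)) ∈ S
    · have h0 := h₁.parent_eq_zero _ hS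
      rw [← h₂.apply_eq_zero_iff, h₂.apply_parent w (h0 ▸ h₂.zero_notMem), h0]
    · rw [← h₁.apply_parent _ hS] at hw
      exact h₂.parent_eq_zero w (by_contra fun hne => (hmem _).mpr hne hw)
  · simp only [Function.Embedding.trans_apply] at hw ⊢
    have hS : t.parent (e₁ (e₂ w)) ∉ S := fun hS => hw (Finset.mem_union_left _ hS)
    rw [← h₁.apply_parent _ hS] at hw ⊢
    rw [h₂.apply_parent w ((hmem _).mp hw)]

lemma iso {e₁ : Fin (t₁.n + 1) ↪ Fin (t.n + 1)} {e₂ : Fin (t₂.n + 1) ↪ Fin (t.n + 1)}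
    (h₁ : IsDeletionVia t S t₁ e₁) (h₂ : IsDeletionVia t S t₂ e₂) : Iso t₁ t₂ := by
  let g : Fin (t₁.n + 1) ≃ Fin (t₂.n + 1) := (Equiv.ofInjective e₁ e₁.injective).trans
    ((Equiv.setCongr (h₁.range_eq.trans h₂.range_eq.symm)).trans
      (Equiv.ofInjective e₂ e₂.injective).symm)
  have hg : ∀ w, e₂ (g w) = e₁ w := fun w => Equiv.apply_ofInjective_symm e₂.injective _
  refine ⟨g, e₂.injective ?_, fun w => e₂.injective ?_, fun w => ?_, fun w => e₂.injective ?_⟩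
  · rw [hg, h₁.map_zero, h₂.map_zero]
  · by_cases hS : t.parent (e₁ w) ∈ S
    · rw [hg, h₁.parent_eq_zero w hS, h₂.parent_eq_zero _ (by rwa [hg]), h₁.map_zero,
        h₂.map_zero]
    · rw [hg, h₁.apply_parent w hS, h₂.apply_parent _ (by rwa [hg]), hg]
  · rw [← h₂.colour_apply, hg, h₁.colour_apply]
  · rw [← h₂.mate_apply, hg, h₁.mate_apply, hg]

section leaves
variable (hS : ∀ s ∈ S, ∀ u, t.parent u = s → u = s)
include hS

lemma apply_parent_of_isLeaf (h : IsDeletionVia t S t' e) (w : Fin (t'.n + 1)) :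
    e (t'.parent w) = t.parent (e w) :=
  h.apply_parent w fun hw => h.apply_notMem w (hS _ hw _ rfl ▸ hw)

lemma parent_eq_zero_iff_of_isLeaf (h : IsDeletionVia t S t' e) (w : Fin (t'.n + 1)) :
    t'.parent w = 0 ↔ t.parent (e w) = 0 := by
  rw [← h.apply_parent_of_isLeaf hS, h.apply_eq_zero_iff]

end leaves

lemma isLeaf_iff_of_parent_eq_zero (h : IsDeletionVia t S t' e)
    (hS : ∀ s ∈ S, t.parent s = 0) {w : Fin (t'.n + 1)} (hw : w ≠ 0) :
    (∀ x, t'.parent x = w → x = w) ↔ ∀ u, t.parent u = e w → u = e w := by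
  have hew : e w ≠ 0 := fun h' => hw (h.apply_eq_zero_iff.mp h')
  constructor
  · intro hleaf u hu
    obtain ⟨x, rfl⟩ := h.exists_apply_eq fun huS => hew (hu ▸ hS u huS)
    have hpx : t.parent (e x) ∉ S := hu ▸ h.apply_notMem w
    rw [hleaf x (e.injective ((h.apply_parent x hpx).trans hu))]
  · intro hleaf x hx
    by_cases hpx : t.parent (e x) ∈ S
    · exact absurd (hx ▸ h.parent_eq_zero x hpx) hw
    · exact e.injective (hleaf _ (by rw [← h.apply_parent x hpx, hx]))

section reps
variable {P : Fin (t.n + 1) → Prop} [DecidablePred P] {P' : Fin (t'.n + 1) → Prop}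
  [DecidablePred P']

lemma apply_mem_reps_iff (h : IsDeletionVia t S t' e) (hmono : StrictMono e)
    (hP : ∀ w ≠ 0, P (e w) ↔ P' w) {w : Fin (t'.n + 1)} :
    e w ∈ t.reps P ↔ w ∈ t'.reps P' := by
  simp only [mem_reps, h.mate_apply, ne_eq, h.apply_eq_zero_iff, hmono.le_iff_le]
  constructor
  · rintro ⟨hw, hle, hPw, hPm⟩
    exact ⟨hw, hle, (hP w hw).mp hPw, (hP _ (by simpa using hw)).mp hPm⟩
  · rintro ⟨hw, hle, hPw, hPm⟩
    exact ⟨hw, hle, (hP w hw).mpr hPw, (hP _ (by simpa using hw)).mpr hPm⟩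

lemma map_reps (h : IsDeletionVia t S t' e) (hmono : StrictMono e)
    (hP : ∀ w ≠ 0, P (e w) ↔ P' w) : (t'.reps P').map e = (t.reps P).filter (· ∉ S) := by
  ext u
  simp only [Finset.mem_map, Finset.mem_filter]
  constructor
  · rintro ⟨w, hw, rfl⟩
    exact ⟨(h.apply_mem_reps_iff hmono hP).mpr hw, h.apply_notMem w⟩
  · rintro ⟨hu, huS⟩
    obtain ⟨w, rfl⟩ := h.exists_apply_eq huS
    exact ⟨w, (h.apply_mem_reps_iff hmono hP).mp hu, rfl⟩

end reps

lemma isAlphaLeafRemoval {ℓ : Fin (t.n + 1)} (h : IsDeletionVia t (t.block ℓ) t' e)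
    (hc : t.colour ℓ = some .alpha) (hl : t.IsLeaf ℓ) : t.IsAlphaLeafRemoval ℓ t' := by
  have hblock : t.block ℓ = {ℓ} := by simp [block, mate_eq_self_of_colour_alpha hc]
  rw [hblock] at h
  exact ⟨hc, hl, e, h.map_zero, by simpa using h.range_eq, h.colour_apply,
    fun w => (h.apply_parent_of_isLeaf (fun s hs => Finset.mem_singleton.mp hs ▸ hl) w).symm,
    h.mate_apply⟩

lemma isBetaPairLeafRemoval {v : Fin (t.n + 1)} (h : IsDeletionVia t (t.block v) t' e)
    (hc : t.colour v = some .beta) (hl : t.IsLeaf v) (hlm : t.IsLeaf (t.mate v)) :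
    t.IsBetaPairLeafRemoval v t' := by
  have hleaves : ∀ s ∈ t.block v, ∀ u, t.parent u = s → u = s := by
    intro s hs
    rcases mem_block.mp hs with rfl | rfl
    exacts [hl, hlm]
  refine ⟨hc, hl, hlm, e, h.map_zero, by simpa [mem_block, not_or] using h.range_eq,
    h.colour_apply, fun w => (h.apply_parent_of_isLeaf hleaves w).symm, h.mate_apply⟩

end IsDeletionVia

lemma Iso.exists_isDeletionVia (h : Iso t₁ t₂) :
    ∃ g : Fin (t₁.n + 1) ≃ Fin (t₂.n + 1), IsDeletionVia t₂ ∅ t₁ g.toEmbedding := by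
  obtain ⟨g, h0, hp, hc, hm⟩ := h
  exact ⟨g, h0, by simp, hc, hm, by simp, fun w _ => (hp w).symm⟩

lemma IsDeletion.iso {S : Finset (Fin (t.n + 1))} (h₁ : IsDeletion t S t₁)
    (h₂ : IsDeletion t S t₂) : Iso t₁ t₂ :=
  h₁.elim fun _ h₁ => h₂.elim fun _ h₂ => h₁.iso h₂

lemma IsRootAlphaContraction.isDeletion {v : Fin (t.n + 1)}
    (h : t.IsRootAlphaContraction v r) : IsDeletion t (t.block v) r := by
  obtain ⟨hc, -, e, h0, hrange, hcol, hmate, hpar⟩ := h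
  have hblock : t.block v = {v} := by simp [block, mate_eq_self_of_colour_alpha hc]
  rw [hblock]
  exact ⟨e, h0, by simpa using hrange, hcol, hmate, fun w hw => (hpar w).1 (by simpa using hw),
    fun w hw => (hpar w).2 (by simpa using hw)⟩

lemma IsRootBetaPairContraction.isDeletion {v : Fin (t.n + 1)}
    (h : t.IsRootBetaPairContraction v r) : IsDeletion t (t.block v) r := by
  obtain ⟨-, -, -, e, h0, hrange, hcol, hmate, hpar⟩ := h
  exact ⟨e, h0, by simpa [mem_block, not_or] using hrange, hcol, hmate,
    fun w hw => (hpar w).1 (mem_block.mp hw), fun w hw => (hpar w).2 (mt mem_block.mpr hw)⟩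

structure IsDeletable (t : ExoticTree) (S : Finset (Fin (t.n + 1))) : Prop where
  zero_notMem : (0 : Fin (t.n + 1)) ∉ S
  mate_mem : ∀ u ∈ S, t.mate u ∈ S

lemma isDeletable_block {v : Fin (t.n + 1)} (hv : v ≠ 0) : t.IsDeletable (t.block v) :=
  ⟨zero_notMem_block hv, fun u hu => by rcases mem_block.mp hu with rfl | rfl <;> simp [block]⟩

lemma IsDeletable.union {S T : Finset (Fin (t.n + 1))} (hS : t.IsDeletable S)
    (hT : t.IsDeletable T) : t.IsDeletable (S ∪ T) :=
  ⟨by simp [hS.zero_notMem, hT.zero_notMem], fun u hu => by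
    rcases Finset.mem_union.mp hu with h | h
    exacts [Finset.mem_union_left _ (hS.mate_mem u h), Finset.mem_union_right _ (hT.mate_mem u h)]⟩

section deleteOf
variable (t) {S : Finset (Fin (t.n + 1))}

lemma card_compl_eq_of_zero_notMem (h0 : (0 : Fin (t.n + 1)) ∉ S) :
    Sᶜ.card = t.n - S.card + 1 := by
  have hS : S ⊆ Finset.univ.erase 0 := fun u hu =>
    Finset.mem_erase.mpr ⟨fun h => h0 (h ▸ hu), Finset.mem_univ u⟩
  have := Finset.card_le_card hS
  rw [Finset.card_erase_of_mem (Finset.mem_univ _), Finset.card_univ, Fintype.card_fin] at this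
  rw [Finset.card_compl, Fintype.card_fin]
  omega

noncomputable def keptEmb (h0 : (0 : Fin (t.n + 1)) ∉ S) :
    Fin (t.n - S.card + 1) ↪o Fin (t.n + 1) :=
  Sᶜ.orderEmbOfFin (t.card_compl_eq_of_zero_notMem h0)

variable {t} (h0 : (0 : Fin (t.n + 1)) ∉ S)

lemma range_keptEmb : Set.range (t.keptEmb h0) = {u | u ∉ S} := by
  ext u
  simp [keptEmb, Finset.range_orderEmbOfFin]

lemma keptEmb_zero : t.keptEmb h0 0 = 0 := by
  obtain ⟨w, hw⟩ : (0 : Fin (t.n + 1)) ∈ Set.range (t.keptEmb h0) := by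
    rw [range_keptEmb]
    exact h0
  exact le_antisymm (hw ▸ (t.keptEmb h0).monotone (Fin.zero_le w)) (Fin.zero_le _)

lemma keptEmb_notMem (w : Fin (t.n - S.card + 1)) : t.keptEmb h0 w ∉ S := by
  have hw := Set.mem_range_self (f := t.keptEmb h0) w
  rwa [range_keptEmb] at hw

lemma mate_keptEmb_notMem (hS : t.IsDeletable S) (w : Fin (t.n - S.card + 1)) :
    t.mate (t.keptEmb hS.zero_notMem w) ∉ S := fun h =>
  keptEmb_notMem _ w (by simpa using hS.mate_mem _ h)

lemma keptEmb_invFun {u : Fin (t.n + 1)} (hu : u ∉ S) :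
    t.keptEmb h0 (Function.invFun (t.keptEmb h0) u) = u :=
  Function.invFun_eq (by rw [← Set.mem_range, range_keptEmb]; exact hu)

lemma invFun_keptEmb (w : Fin (t.n - S.card + 1)) :
    Function.invFun (t.keptEmb h0) (t.keptEmb h0 w) = w :=
  Function.leftInverse_invFun (t.keptEmb h0).injective w

noncomputable def delParent (w : Fin (t.n - S.card + 1)) : Fin (t.n - S.card + 1) :=
  if t.parent (t.keptEmb h0 w) ∈ S then 0
  else Function.invFun (t.keptEmb h0) (t.parent (t.keptEmb h0 w))

lemma keptEmb_delParent {w : Fin (t.n - S.card + 1)} (hw : t.parent (t.keptEmb h0 w) ∉ S) :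
    t.keptEmb h0 (delParent h0 w) = t.parent (t.keptEmb h0 w) := by
  rw [delParent, if_neg hw, keptEmb_invFun h0 hw]

lemma delParent_zero : delParent h0 0 = 0 := by
  rw [delParent, keptEmb_zero, t.parent_root, if_neg h0, ← keptEmb_zero h0, invFun_keptEmb]

lemma iterate_delParent_eq_zero_or (w : Fin (t.n - S.card + 1)) (j : ℕ) :
    (delParent h0)^[j] w = 0 ∨
      t.keptEmb h0 ((delParent h0)^[j] w) = t.parent^[j] (t.keptEmb h0 w) := by
  induction j with
  | zero => exact Or.inr rfl
  | succ j ih =>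
    rw [Function.iterate_succ_apply', Function.iterate_succ_apply']
    rcases ih with h | h
    · exact Or.inl (by rw [h, delParent_zero])
    · by_cases hS : t.parent (t.keptEmb h0 ((delParent h0)^[j] w)) ∈ S
      · exact Or.inl (if_pos hS)
      · exact Or.inr (by rw [keptEmb_delParent h0 hS, h])

lemma iterate_delParent (w : Fin (t.n - S.card + 1)) :
    (delParent h0)^[t.n - S.card] w = 0 := by
  -- following the chain in `t` only bounds the number of steps by `t.n`
  have h := Function.iterate_card_sub_one_eq_of_forall_exists (delParent_zero h0)
    (fun w => ⟨t.n, (iterate_delParent_eq_zero_or h0 w t.n).elim id fun h => by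
      rwa [t.reaches_root, ← keptEmb_zero h0, (t.keptEmb h0).injective.eq_iff] at h⟩) w
  simpa using h

variable (t) in
noncomputable def deleteOf (hS : t.IsDeletable S) : ExoticTree where
  n := t.n - S.card
  parent := delParent hS.zero_notMem
  colour w := t.colour (t.keptEmb hS.zero_notMem w)
  mate w := Function.invFun (t.keptEmb hS.zero_notMem) (t.mate (t.keptEmb hS.zero_notMem w))
  parent_root := delParent_zero hS.zero_notMem
  reaches_root := iterate_delParent hS.zero_notMem
  colour_root := by simp only [keptEmb_zero, t.colour_root]
  colour_nonroot w hw := t.colour_nonroot _ (by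
    rwa [← keptEmb_zero hS.zero_notMem, ne_eq, (t.keptEmb _).injective.eq_iff])
  mate_beta w hw := by
    have hm := mate_keptEmb_notMem hS w
    obtain ⟨hc, -, hne⟩ := t.mate_beta _ hw
    refine ⟨by rwa [keptEmb_invFun _ hm], by rw [keptEmb_invFun _ hm, mate_mate,
      invFun_keptEmb], fun h => hne ?_⟩
    rw [← keptEmb_invFun _ hm, h]
  mate_nonbeta w hw := by rw [t.mate_nonbeta _ hw, invFun_keptEmb]

lemma isDeletionVia_deleteOf (hS : t.IsDeletable S) :
    IsDeletionVia t S (t.deleteOf hS) (t.keptEmb hS.zero_notMem).toEmbedding := by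
  refine ⟨keptEmb_zero _, range_keptEmb _, fun w => rfl, fun w => ?_, fun w hw => if_pos hw,
    fun w hw => keptEmb_delParent _ hw⟩
  exact (keptEmb_invFun _ (mate_keptEmb_notMem hS w)).symm

end deleteOf

open scoped Classical in
/-- Junk value `t` when `S` is not deletable. -/
noncomputable def delete (t : ExoticTree) (S : Finset (Fin (t.n + 1))) : ExoticTree :=
  if hS : t.IsDeletable S then t.deleteOf hS else t

lemma delete_eq {S : Finset (Fin (t.n + 1))} (hS : t.IsDeletable S) :
    t.delete S = t.deleteOf hS := by
  classical
  exact dif_pos hS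

lemma isDeletion_delete {S : Finset (Fin (t.n + 1))} (hS : t.IsDeletable S) :
    IsDeletion t S (t.delete S) :=
  delete_eq hS ▸ ⟨_, isDeletionVia_deleteOf hS⟩

lemma effSize_eq_card_reps (t : ExoticTree) : t.effSize = (t.reps fun _ => True).card + 1 := by
  have h : t.reps (fun _ => True) =
      Finset.univ.filter (fun v => t.colour v = some .alpha) ∪
        Finset.univ.filter (fun v => t.colour v = some .beta ∧ v < t.mate v) := by
    ext v
    simp [mem_reps_iff_alpha_or_beta]
  rw [h, Finset.card_union_of_disjoint (Finset.disjoint_filter.2 fun v _ h₁ h₂ => by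
    simp [h₁] at h₂), effSize, numAlpha, numPairs]
  omega

lemma pos_of_two_le_effSize (h : 2 ≤ t.effSize) : 0 < t.n := by
  refine Nat.pos_of_ne_zero fun hn => ?_
  have : t.reps (fun _ => True) = ∅ :=
    Finset.eq_empty_of_forall_notMem fun v hv => (mem_reps.mp hv).1 (Fin.ext (by omega))
  rw [effSize_eq_card_reps, this] at h
  simp at h

lemma effSize_deleteOf_block {v : Fin (t.n + 1)} (hv : v ≠ 0) :
    (t.deleteOf (isDeletable_block hv)).effSize + 1 = t.effSize := by
  have h := isDeletionVia_deleteOf (isDeletable_block hv)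
  have hmap := congrArg Finset.card
    (h.map_reps (t.keptEmb _).strictMono (P := fun _ => True) (P' := fun _ => True) (by simp))
  rw [effSize_eq_card_reps, effSize_eq_card_reps, (Finset.card_map _).symm.trans hmap,
    ← Finset.card_filter_add_card_filter_not (s := t.reps _) (· ∈ t.block v),
    reps_filter_mem_block hv trivial trivial, Finset.card_singleton]
  omega

section equiv
variable {P : Fin (t.n + 1) → Prop} [DecidablePred P] {P' : Fin (t'.n + 1) → Prop}
  [DecidablePred P'] (g : Fin (t'.n + 1) ≃ Fin (t.n + 1)) (hgm : ∀ w, t.mate (g w) = g (t'.mate w))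
include hgm

lemma rep_apply_mem_reps (hg0 : g 0 = 0) (hP : ∀ w ≠ 0, P (g w) ↔ P' w) {w : Fin (t'.n + 1)}
    (hw : w ∈ t'.reps P') : t.rep (g w) ∈ t.reps P := by
  obtain ⟨hw0, -, hPw, hPm⟩ := mem_reps.mp hw
  have hm0 : t'.mate w ≠ 0 := by simpa using hw0
  refine rep_mem_reps (by rwa [← hg0, g.injective.ne_iff]) ((hP w hw0).mpr hPw) ?_
  rw [hgm]
  exact (hP _ hm0).mpr hPm

lemma rep_symm_rep_apply {w : Fin (t'.n + 1)} (hw : w ≤ t'.mate w) :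
    t'.rep (g.symm (t.rep (g w))) = w := by
  have hmem : g.symm (t.rep (g w)) ∈ t'.block w := by
    rcases mem_block.mp (t.rep_mem_block (g w)) with h | h <;> simp [h, hgm, mem_block]
  rw [rep_of_mem_block hmem, rep_eq_self hw]

lemma sum_reps_of_equiv (hg0 : g 0 = 0) (hP : ∀ w ≠ 0, P (g w) ↔ P' w) {M : Type*} [AddCommMonoid M]
    {F : Fin (t.n + 1) → M} (hF : ∀ v, F (t.mate v) = F v) :
    ∑ w ∈ t'.reps P', F (g w) = ∑ v ∈ t.reps P, F v := by
  have hg0' : g.symm 0 = 0 := by rw [g.symm_apply_eq, hg0]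
  have hgm' : ∀ v, t'.mate (g.symm v) = g.symm (t.mate v) := fun v => by
    rw [g.eq_symm_apply, ← hgm, g.apply_symm_apply]
  have hP' : ∀ v ≠ 0, P' (g.symm v) ↔ P v := fun v hv => by
    rw [← hP _ (by rwa [← hg0', g.symm.injective.ne_iff]), g.apply_symm_apply]
  refine Finset.sum_nbij' (fun w => t.rep (g w)) (fun v => t'.rep (g.symm v))
    (fun w hw => rep_apply_mem_reps g hgm hg0 hP hw)
    (fun v hv => rep_apply_mem_reps g.symm hgm' hg0' hP' hv)
    (fun w hw => rep_symm_rep_apply g hgm (mem_reps.mp hw).2.1)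
    (fun v hv => by simpa using rep_symm_rep_apply g.symm hgm' (mem_reps.mp hv).2.1)
    (fun w _ => (apply_rep_eq hF _).symm)

end equiv

lemma Iso.effSize_eq (h : Iso t₁ t₂) : t₁.effSize = t₂.effSize := by
  obtain ⟨g, hg⟩ := h.exists_isDeletionVia
  have := sum_reps_of_equiv g hg.mate_apply hg.map_zero (P := fun _ => True)
    (P' := fun _ => True) (by simp) (F := fun _ => 1) (fun _ => rfl)
  simp only [Finset.sum_const, smul_eq_mul, mul_one] at this
  rw [effSize_eq_card_reps, effSize_eq_card_reps, this]

lemma isLeaf_iff_parent_eq_zero_of_forall_mem_block {v : Fin (t.n + 1)} (hv : v ≠ 0)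
    (hall : ∀ u ≠ 0, u ∈ t.block v) :
    (∀ x ∈ t.block v, ∀ w, t.parent w = x → w = x) ↔ ∀ x ∈ t.block v, t.parent x = 0 := by
  have hx0 : ∀ x ∈ t.block v, x ≠ 0 := fun x hx h => zero_notMem_block hv (h ▸ hx)
  constructor
  · intro hleaf x hx
    by_contra hpx
    have hfix : t.parent x = x := (hleaf _ (hall _ hpx) x rfl).symm
    exact hx0 x hx (by simpa [Function.iterate_fixed hfix] using t.reaches_root x)
  · intro hroot x hx w hw
    by_cases hw0 : w = 0
    · exact absurd (by rw [← hw, hw0, t.parent_root]) (hx0 x hx)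
    · exact absurd (hw ▸ hroot w (hall w hw0)) (hx0 x hx)

lemma rootReps_eq_leafReps (h : t.effSize = 2) : t.rootReps = t.leafReps := by
  obtain ⟨v, hv⟩ : ∃ v, t.reps (fun _ => True) = {v} :=
    Finset.card_eq_one.mp (by rw [effSize_eq_card_reps] at h; omega)
  have hall : ∀ u ≠ 0, ∀ w ≠ 0, w ∈ t.block u := fun u hu w hw => by
    have hrep : ∀ x ≠ 0, t.rep x = v := fun x hx =>
      Finset.mem_singleton.mp (hv ▸ rep_mem_reps hx trivial trivial)
    rw [← block_rep, hrep u hu, ← hrep w hw, block_rep]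
    simp [mem_block]
  ext u
  simp only [rootReps, leafReps, mem_reps]
  refine and_congr_right fun hu => and_congr_right fun _ => ?_
  simpa [block] using (isLeaf_iff_parent_eq_zero_of_forall_mem_block hu (hall u hu)).symm

lemma effSize_sub_one_mul_one_div {fac : ExoticTree → ℚ} {v : Fin (t.n + 1)} (hv : v ≠ 0) :
    ((t.effSize - 1 : ℕ) : ℚ) * (1 / fac (t.delete (t.block v))) =
      ((t.deleteOf (isDeletable_block hv)).effSize : ℚ) /
        fac (t.deleteOf (isDeletable_block hv)) := by
  rw [delete_eq (isDeletable_block hv), ← effSize_deleteOf_block hv, Nat.add_sub_cancel,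
    mul_one_div]

namespace IsTreeFactorial

variable {fac : ExoticTree → ℚ} (hfac : IsTreeFactorial fac)
include hfac

lemma effSize_div_eq_sum_leafReps (hn : 0 < t.n) (r : Fin (t.n + 1) → ExoticTree)
    (hr : ∀ v ∈ t.leafReps, IsDeletion t (t.block v) (r v)) :
    (t.effSize : ℚ) / fac t = ∑ v ∈ t.leafReps, 1 / fac (r v) := by
  have hα : ∀ v (hv : v ∈ t.alphaLeaves), t.IsAlphaLeafRemoval v (r v) := fun v hv => by
    obtain ⟨e, he⟩ := hr v (leafReps_eq_union ▸ Finset.mem_union_left _ hv)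
    obtain ⟨-, hc, hl⟩ := Finset.mem_filter.mp hv
    exact he.isAlphaLeafRemoval hc hl
  have hβ : ∀ v (hv : v ∈ t.betaLeafPairs), t.IsBetaPairLeafRemoval v (r v) := fun v hv => by
    obtain ⟨e, he⟩ := hr v (leafReps_eq_union ▸ Finset.mem_union_right _ hv)
    obtain ⟨-, hc, -, hl, hlm⟩ := Finset.mem_filter.mp hv
    exact he.isBetaPairLeafRemoval hc hl hlm
  rw [hfac.2 t hn (fun v _ => r v) (fun v _ => r v) hα hβ,
    Finset.sum_attach t.alphaLeaves (fun v => 1 / fac (r v)),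
    Finset.sum_attach t.betaLeafPairs (fun v => 1 / fac (r v)), leafReps_eq_union,
    Finset.sum_union]
  exact Finset.disjoint_filter.2 fun v _ h₁ h₂ => by simp [h₁.1] at h₂

lemma effSize_div_eq_sum_leafReps_delete (hn : 0 < t.n) :
    (t.effSize : ℚ) / fac t = ∑ v ∈ t.leafReps, 1 / fac (t.delete (t.block v)) :=
  hfac.effSize_div_eq_sum_leafReps hn _ fun _ hv =>
    isDeletion_delete (isDeletable_block (mem_reps.mp hv).1)

/-- The recursion at `t₂` can be fed with the removals from `t₁`, transported along the
isomorphism. -/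
lemma eq_of_iso (h : Iso t₁ t₂) : fac t₁ = fac t₂ := by
  obtain ⟨g, hg⟩ := h.exists_isDeletionVia
  have hgm : ∀ w, t₂.mate (g w) = g (t₁.mate w) := hg.mate_apply
  have hn : t₁.n = t₂.n := by simpa using Fintype.card_congr g
  rcases Nat.eq_zero_or_pos t₁.n with h0 | hpos
  · rw [hfac.1 t₁ h0, hfac.1 t₂ (hn ▸ h0)]
  set F := fun v => 1 / fac (t₁.delete (t₁.block v))
  have h₁ := hfac.effSize_div_eq_sum_leafReps_delete hpos
  have h₂ := hfac.effSize_div_eq_sum_leafReps (hn ▸ hpos)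
    (fun v => t₁.delete (t₁.block (g.symm v))) fun v hv => by
      obtain ⟨e, he⟩ := isDeletion_delete (t := t₁)
        (isDeletable_block (t := t₁) (v := g.symm v) (by simpa [← hg.apply_eq_zero_iff]
          using (mem_reps.mp hv).1))
      have := hg.trans he
      rw [Finset.empty_union, hg.map_block] at this
      simp only [Equiv.coe_toEmbedding, Equiv.apply_symm_apply] at this
      exact ⟨_, this⟩
  have hsum : ∑ w ∈ t₁.leafReps, F w = ∑ v ∈ t₂.leafReps, F (g.symm v) := by
    have := sum_reps_of_equiv g hgm hg.map_zero
      (P := fun v => ∀ w, t₂.parent w = v → w = v) (P' := fun v => ∀ w, t₁.parent w = v → w = v)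
      (fun w hw => (hg.isLeaf_iff_of_parent_eq_zero (by simp) hw).symm)
      (F := fun v => F (g.symm v)) fun v => by
        rw [← g.apply_symm_apply v, hgm]
        simp [F]
    simp only [Equiv.symm_apply_apply] at this
    exact this
  rw [← h.effSize_eq, ← hsum, ← h₁, div_eq_mul_inv, div_eq_mul_inv] at h₂
  have ha : (t₁.effSize : ℚ) ≠ 0 := by rw [effSize]; positivity
  exact inv_injective (mul_left_cancel₀ ha h₂.symm)

lemma eq_of_isDeletion {S : Finset (Fin (t.n + 1))} (h₁ : IsDeletion t S t₁)
    (h₂ : IsDeletion t S t₂) : fac t₁ = fac t₂ :=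
  hfac.eq_of_iso (h₁.iso h₂)


/-- Deleting a block of `t.deleteOf hS` amounts to deleting it together with `S` from `t`. -/
lemma sum_reps_deleteOf {S : Finset (Fin (t.n + 1))} (hS : t.IsDeletable S)
    {P : Fin (t.n + 1) → Prop} [DecidablePred P]
    {P' : Fin ((t.deleteOf hS).n + 1) → Prop} [DecidablePred P']
    (hP : ∀ w ≠ 0, P (t.keptEmb hS.zero_notMem w) ↔ P' w) :
    ∑ w ∈ (t.deleteOf hS).reps P', 1 / fac ((t.deleteOf hS).delete ((t.deleteOf hS).block w)) =
      ∑ u ∈ (t.reps P).filter (· ∉ S), 1 / fac (t.delete (S ∪ t.block u)) := by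
  have h := isDeletionVia_deleteOf hS
  rw [← h.map_reps (t.keptEmb _).strictMono hP]
  refine Eq.symm ((Finset.sum_map _ _ _).trans (Finset.sum_congr rfl fun w hw => ?_))
  have hw0 : w ≠ 0 := (mem_reps.mp hw).1
  obtain ⟨e, he⟩ := isDeletion_delete (isDeletable_block hw0)
  have hcomp := h.trans he
  rw [h.map_block] at hcomp
  rw [hfac.eq_of_isDeletion ⟨_, hcomp⟩
    (isDeletion_delete (hS.union (isDeletable_block (h.apply_eq_zero_iff.not.mpr hw0))))]

lemma sum_rootReps_deleteOf_leaf {ℓ : Fin (t.n + 1)} (hℓ : ℓ ∈ t.leafReps) :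
    ∑ w ∈ (t.deleteOf (isDeletable_block (mem_reps.mp hℓ).1)).rootReps,
        1 / fac ((t.deleteOf _).delete ((t.deleteOf _).block w)) =
      ∑ u ∈ t.rootReps.filter (· ∉ t.block ℓ), 1 / fac (t.delete (t.block ℓ ∪ t.block u)) := by
  have hleaves : ∀ s ∈ t.block ℓ, ∀ u, t.parent u = s → u = s := fun s hs => by
    obtain ⟨-, -, hl, hlm⟩ := mem_reps.mp hℓ
    rcases mem_block.mp hs with rfl | rfl
    exacts [hl, hlm]
  exact hfac.sum_reps_deleteOf _ fun w _ =>
    ((isDeletionVia_deleteOf _).parent_eq_zero_iff_of_isLeaf hleaves w).symm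

lemma sum_leafReps_deleteOf_root {u : Fin (t.n + 1)} (hu : u ∈ t.rootReps) :
    ∑ w ∈ (t.deleteOf (isDeletable_block (mem_reps.mp hu).1)).leafReps,
        1 / fac ((t.deleteOf _).delete ((t.deleteOf _).block w)) =
      ∑ ℓ ∈ t.leafReps.filter (· ∉ t.block u), 1 / fac (t.delete (t.block u ∪ t.block ℓ)) := by
  have hroot : ∀ s ∈ t.block u, t.parent s = 0 := fun s hs => by
    obtain ⟨-, -, hp, hpm⟩ := mem_reps.mp hu
    rcases mem_block.mp hs with rfl | rfl
    exacts [hp, hpm]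
  exact hfac.sum_reps_deleteOf _ fun w hw =>
    ((isDeletionVia_deleteOf _).isLeaf_iff_of_parent_eq_zero hroot hw).symm

theorem effSize_div_eq_sum_rootReps {t : ExoticTree} (ht : 2 ≤ t.effSize) :
    (t.effSize : ℚ) / fac t = ∑ u ∈ t.rootReps, 1 / fac (t.delete (t.block u)) := by
  induction hk : t.effSize using Nat.strong_induction_on generalizing t with
  | _ k ih =>
  subst hk
  rcases ht.eq_or_lt with h2 | h3
  · rw [rootReps_eq_leafReps h2.symm]
    exact hfac.effSize_div_eq_sum_leafReps_delete (pos_of_two_le_effSize ht)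
  have hdel : ∀ {v : Fin (t.n + 1)} (hv : v ≠ 0),
      2 ≤ (t.deleteOf (isDeletable_block hv)).effSize ∧
        (t.deleteOf (isDeletable_block hv)).effSize < t.effSize := fun hv => by
    have := effSize_deleteOf_block hv
    omega
  have hc : ((t.effSize - 1 : ℕ) : ℚ) ≠ 0 := by exact_mod_cast (by omega : t.effSize - 1 ≠ 0)
  refine mul_left_cancel₀ hc ?_
  calc _ = ∑ ℓ ∈ t.leafReps, ∑ u ∈ t.rootReps.filter (· ∉ t.block ℓ),
          1 / fac (t.delete (t.block ℓ ∪ t.block u)) := by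
        rw [hfac.effSize_div_eq_sum_leafReps_delete (pos_of_two_le_effSize ht), Finset.mul_sum]
        refine Finset.sum_congr rfl fun ℓ hℓ => ?_
        have hℓ0 := (mem_reps.mp hℓ).1
        rw [effSize_sub_one_mul_one_div hℓ0, ih _ (hdel hℓ0).2 (hdel hℓ0).1 rfl,
          hfac.sum_rootReps_deleteOf_leaf hℓ]
    _ = ∑ u ∈ t.rootReps, ∑ ℓ ∈ t.leafReps.filter (· ∉ t.block u),
          1 / fac (t.delete (t.block u ∪ t.block ℓ)) := by
        rw [Finset.sum_comm' (t' := t.rootReps)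
          (s' := fun u => t.leafReps.filter (· ∉ t.block u)) fun ℓ u => by
            simp only [Finset.mem_filter, mem_block_comm (u := u)]
            tauto]
        exact Finset.sum_congr rfl fun u _ => Finset.sum_congr rfl fun ℓ _ => by
          rw [Finset.union_comm]
    _ = _ := by
        rw [Finset.mul_sum]
        refine Finset.sum_congr rfl fun u hu => ?_
        have hu0 := (mem_reps.mp hu).1
        rw [effSize_sub_one_mul_one_div hu0,
          hfac.effSize_div_eq_sum_leafReps_delete (pos_of_two_le_effSize (hdel hu0).1),
          hfac.sum_leafReps_deleteOf_root hu]

lemma factorial_div_eq_of_isDeletion {v : Fin (t.n + 1)} (hv : v ≠ 0)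
    (h : IsDeletion t (t.block v) r) :
    (r.effSize.factorial : ℚ) / fac r =
      (t.effSize - 1).factorial * (1 / fac (t.delete (t.block v))) := by
  have hiso := h.iso (isDeletion_delete (isDeletable_block hv))
  have hsize : r.effSize = t.effSize - 1 := by
    have := effSize_deleteOf_block hv
    rw [hiso.effSize_eq, delete_eq (isDeletable_block hv)]
    omega
  rw [hsize, hfac.eq_of_iso hiso, mul_one_div]

end IsTreeFactorial

end ExoticTree

open ExoticTree

/-- For an exotic coloured tree `τ` with effective size `|τ| > 1`,
`|τ|!/τ! = Σ_{τ' ∈ R_e⁻(τ)} |τ'|!/τ'!`, the sum running (with multiplicity, one member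
per choice of effective edge at the root) over the family `R_e⁻(τ)` of trees obtained
from `τ` by removing one effective edge at the root. -/
theorem stmt6 (fac : ExoticTree → ℚ) (hfac : IsTreeFactorial fac)
    (t : ExoticTree) (ht : 1 < t.effSize)
    (cα : (v : Fin (t.n + 1)) → v ∈ t.rootAlphaChildren → ExoticTree)
    (cβ : (v : Fin (t.n + 1)) → v ∈ t.rootBetaPairs → ExoticTree)
    (hcα : ∀ v h, t.IsRootAlphaContraction v (cα v h))
    (hcβ : ∀ v h, t.IsRootBetaPairContraction v (cβ v h)) :
    (Nat.factorial t.effSize : ℚ) / fac t =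
      (∑ v ∈ t.rootAlphaChildren.attach,
        (Nat.factorial (cα v.1 v.2).effSize : ℚ) / fac (cα v.1 v.2)) +
      ∑ v ∈ t.rootBetaPairs.attach,
        (Nat.factorial (cβ v.1 v.2).effSize : ℚ) / fac (cβ v.1 v.2) := by
  set G := fun v => ((t.effSize - 1).factorial : ℚ) * (1 / fac (t.delete (t.block v)))
  have hα : ∀ v h, ((cα v h).effSize.factorial : ℚ) / fac (cα v h) = G v := fun v h =>
    hfac.factorial_div_eq_of_isDeletion (ne_zero_of_colour_eq_some (hcα v h).1)
      (hcα v h).isDeletion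
  have hβ : ∀ v h, ((cβ v h).effSize.factorial : ℚ) / fac (cβ v h) = G v := fun v h =>
    hfac.factorial_div_eq_of_isDeletion (ne_zero_of_colour_eq_some (hcβ v h).1)
      (hcβ v h).isDeletion
  have hdisj : Disjoint t.rootAlphaChildren t.rootBetaPairs :=
    Finset.disjoint_filter.2 fun v _ h₁ h₂ => by simp [h₁.1] at h₂
  simp only [hα, hβ]
  rw [Finset.sum_attach t.rootAlphaChildren G, Finset.sum_attach t.rootBetaPairs G,
    ← Finset.sum_union hdisj,
    ← rootReps_eq_union, ← Finset.mul_sum, ← hfac.effSize_div_eq_sum_rootReps ht]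
  obtain ⟨m, hm⟩ : ∃ m, t.effSize = m + 1 := ⟨t.effSize - 1, by omega⟩
  rw [hm, Nat.factorial_succ, Nat.add_sub_cancel]
  push_cast
  ring
end

section
/- Let T > 0, t ∈ [0, T], and let n, m ≥ 1 be integers. Then the integral over s ∈ [0, T], (x₁,…,x_{n−1}) ∈ [0, T]^{n−1} and (y₁,…,y_{m−1}) ∈ [0, T]^{m−1} of the indicator of the event {s ≤ x_{n−1} ≤ ⋯ ≤ x₁ ≤ t and s ≤ y_{m−1} ≤ ⋯ ≤ y₁ ≤ t} equals binom(n+m−2, n−1) · t^{n+m−1}/(n+m−1)!. -/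
/-!
The integrand is the indicator of the triples `(s, x, y)` with `0 ≤ s ≤ t` and `x`, `y`
decreasing chains in `[s, t]` of lengths `a = n - 1` and `b = m - 1`; since `t ≤ T`, the box
`[0, T]` adds no constraint. Peeling off the smallest coordinate shows by induction that the
decreasing chains of length `k` in `[s, t]` have volume `(t - s)^k / k!`. Cavalieri's principle
in `s` then gives `∫₀ᵗ (t - s)^(a+b) / (a! b!) ds = t^(a+b+1) / ((a+b+1) a! b!)`, which is
`binom(a+b, a) t^(a+b+1) / (a+b+1)!`.
-/

open MeasureTheory Set

def antitoneChain (a : ℕ) (s t : ℝ) : Set (Fin a → ℝ) :=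
  {x | Antitone x ∧ ∀ i, x i ∈ Icc s t}

lemma isClosed_setOf_mem_antitoneChain {α : Type*} [TopologicalSpace α] {a : ℕ}
    {g : α → Fin a → ℝ} {lo hi : α → ℝ} (hg : Continuous g) (hlo : Continuous lo)
    (hhi : Continuous hi) : IsClosed {q | g q ∈ antitoneChain a (lo q) (hi q)} := by
  have hcoord (i : Fin a) : Continuous fun q => g q i := (continuous_apply i).comp hg
  have : {q | g q ∈ antitoneChain a (lo q) (hi q)} =
      (⋂ (i) (j) (_ : i ≤ j), {q | g q j ≤ g q i}) ∩
        ⋂ i, {q | lo q ≤ g q i} ∩ {q | g q i ≤ hi q} := by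
    ext q
    simp [antitoneChain, Antitone, forall_and]
  rw [this]
  exact (isClosed_iInter fun i => isClosed_iInter fun j => isClosed_iInter fun _ =>
      isClosed_le (hcoord j) (hcoord i)).inter
    (isClosed_iInter fun i => (isClosed_le hlo (hcoord i)).inter (isClosed_le (hcoord i) hhi))

lemma integral_Icc_sub_pow (k : ℕ) {s t : ℝ} (h : s ≤ t) :
    ∫ u in Icc s t, (t - u) ^ k = (t - s) ^ (k + 1) / (k + 1) := by
  rw [integral_Icc_eq_integral_Ioc, ← intervalIntegral.integral_of_le h,
    intervalIntegral.integral_comp_sub_left (fun u => u ^ k) t]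
  simp [integral_pow]

lemma volume_setOf_mem_Icc_and_mem {Y : Type*} [MeasureSpace Y]
    [SFinite (volume : Measure Y)] {α β : ℝ} {F : ℝ → Set Y} {f : ℝ → ℝ}
    (hE : MeasurableSet {p : ℝ × Y | p.1 ∈ Icc α β ∧ p.2 ∈ F p.1})
    (hf : ContinuousOn f (Icc α β)) (hf0 : ∀ u ∈ Icc α β, 0 ≤ f u)
    (hF : ∀ u ∈ Icc α β, volume (F u) = ENNReal.ofReal (f u)) :
    volume {p : ℝ × Y | p.1 ∈ Icc α β ∧ p.2 ∈ F p.1} =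
      ENNReal.ofReal (∫ u in Icc α β, f u) := by
  have hslice :
      (fun u => volume (Prod.mk u ⁻¹' {p : ℝ × Y | p.1 ∈ Icc α β ∧ p.2 ∈ F p.1})) =
        (Icc α β).indicator fun u => ENNReal.ofReal (f u) := by
    ext u
    by_cases hu : u ∈ Icc α β
    · simp [-mem_Icc, hu, hF u hu]
    · simp [-mem_Icc, hu]
  rw [Measure.volume_eq_prod, Measure.prod_apply hE, hslice,
    lintegral_indicator measurableSet_Icc, ofReal_integral_eq_lintegral_ofReal hf.integrableOn_Icc
      ((ae_restrict_iff' measurableSet_Icc).2 (.of_forall hf0))]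

lemma mem_antitoneChain_succ_iff {a : ℕ} {s t : ℝ} {x : Fin (a + 1) → ℝ} :
    x ∈ antitoneChain (a + 1) s t ↔
      x (Fin.last a) ∈ Icc s t ∧ Fin.init x ∈ antitoneChain a (x (Fin.last a)) t := by
  constructor
  · rintro ⟨hx, hbound⟩
    exact ⟨hbound _, hx.comp_monotone Fin.strictMono_castSucc.monotone,
      fun i => ⟨hx (Fin.le_last _), (hbound _).2⟩⟩
  · rintro ⟨hlast, hinit, hbound⟩
    refine ⟨fun i j hij => ?_,
      Fin.lastCases hlast fun i => ⟨hlast.1.trans (hbound i).1, (hbound i).2⟩⟩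
    induction j using Fin.lastCases with
    | last => exact Fin.lastCases le_rfl (fun i => (hbound i).1) i
    | cast j =>
      obtain ⟨i, rfl⟩ :=
        Fin.exists_castSucc_eq.2 (Fin.ne_last_of_lt (hij.trans_lt (Fin.castSucc_lt_last j)))
      exact hinit (Fin.castSucc_le_castSucc_iff.1 hij)

lemma volume_antitoneChain (a : ℕ) {s t : ℝ} (h : s ≤ t) :
    volume (antitoneChain a s t) = ENNReal.ofReal ((t - s) ^ a / a.factorial) := by
  induction a generalizing s with
  | zero =>
    have : antitoneChain 0 s t = univ := by ext x; simp [antitoneChain, Antitone]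
    simp [this, volume_pi]
  | succ a ih =>
    set E := {p : ℝ × (Fin a → ℝ) | p.1 ∈ Icc s t ∧ p.2 ∈ antitoneChain a p.1 t}
    have hE : MeasurableSet E :=
      ((isClosed_Icc.preimage continuous_fst).inter (isClosed_setOf_mem_antitoneChain
        continuous_snd continuous_fst continuous_const)).measurableSet
    have hpre : antitoneChain (a + 1) s t =
        MeasurableEquiv.piFinSuccAbove (fun _ => ℝ) (Fin.last a) ⁻¹' E := by
      ext x
      simp [E, mem_antitoneChain_succ_iff]
    calc volume (antitoneChain (a + 1) s t)
        = volume E := by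
          rw [hpre, volume_pi, (measurePreserving_piFinSuccAbove (fun _ => volume)
            (Fin.last a)).measure_preimage hE.nullMeasurableSet]
          rfl
      _ = ENNReal.ofReal (∫ u in Icc s t, (t - u) ^ a / a.factorial) :=
          volume_setOf_mem_Icc_and_mem hE (by fun_prop)
            (fun u hu => by have := sub_nonneg.2 hu.2; positivity) (fun u hu => ih hu.2)
      _ = ENNReal.ofReal ((t - s) ^ (a + 1) / (a + 1).factorial) := by
          rw [integral_div, integral_Icc_sub_pow a h, Nat.factorial_succ]
          push_cast
          field_simp

lemma volume_setOf_mem_antitoneChain_prod (a b : ℕ) {t : ℝ} (ht : 0 ≤ t) :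
    volume {p : ℝ × (Fin a → ℝ) × (Fin b → ℝ) |
        p.1 ∈ Icc 0 t ∧ p.2 ∈ antitoneChain a p.1 t ×ˢ antitoneChain b p.1 t} =
      ENNReal.ofReal ((a + b).choose a * t ^ (a + b + 1) / (a + b + 1).factorial) := by
  have hE : MeasurableSet {p : ℝ × (Fin a → ℝ) × (Fin b → ℝ) |
      p.1 ∈ Icc 0 t ∧ p.2 ∈ antitoneChain a p.1 t ×ˢ antitoneChain b p.1 t} :=
    ((isClosed_Icc.preimage continuous_fst).inter
      ((isClosed_setOf_mem_antitoneChain continuous_snd.fst continuous_fst continuous_const).inter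
        (isClosed_setOf_mem_antitoneChain continuous_snd.snd continuous_fst
          continuous_const))).measurableSet
  have hslice (u : ℝ) (hu : u ∈ Icc 0 t) :
      volume (antitoneChain a u t ×ˢ antitoneChain b u t) =
        ENNReal.ofReal ((t - u) ^ (a + b) / (a.factorial * b.factorial)) := by
    rw [Measure.volume_eq_prod, Measure.prod_prod, volume_antitoneChain a hu.2,
      volume_antitoneChain b hu.2,
      ← ENNReal.ofReal_mul (by have := sub_nonneg.2 hu.2; positivity)]
    congr 1
    ring
  rw [volume_setOf_mem_Icc_and_mem hE (by fun_prop)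
      (fun u hu => by have := sub_nonneg.2 hu.2; positivity) hslice,
    integral_div, integral_Icc_sub_pow _ ht, sub_zero, Nat.cast_add_choose, Nat.factorial_succ]
  push_cast
  field_simp

lemma setIntegral_indicator_antitoneChains (a b : ℕ) {T t : ℝ} (ht : t ∈ Icc (0 : ℝ) T) :
    (∫ p in Icc (0 : ℝ) T ×ˢ
        ((univ.pi fun _ : Fin a => Icc (0 : ℝ) T) ×ˢ
          (univ.pi fun _ : Fin b => Icc (0 : ℝ) T)),
      indicator
        {q : ℝ × (Fin a → ℝ) × (Fin b → ℝ) |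
          q.1 ≤ t ∧
          (∀ i j : Fin a, i ≤ j → q.2.1 j ≤ q.2.1 i) ∧
          (∀ i : Fin a, q.1 ≤ q.2.1 i ∧ q.2.1 i ≤ t) ∧
          (∀ i j : Fin b, i ≤ j → q.2.2 j ≤ q.2.2 i) ∧
          (∀ i : Fin b, q.1 ≤ q.2.2 i ∧ q.2.2 i ≤ t)}
        (fun _ => (1 : ℝ)) p) =
      (a + b).choose a * t ^ (a + b + 1) / (a + b + 1).factorial := by
  set S := {q : ℝ × (Fin a → ℝ) × (Fin b → ℝ) |
          q.1 ≤ t ∧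
          (∀ i j : Fin a, i ≤ j → q.2.1 j ≤ q.2.1 i) ∧
          (∀ i : Fin a, q.1 ≤ q.2.1 i ∧ q.2.1 i ≤ t) ∧
          (∀ i j : Fin b, i ≤ j → q.2.2 j ≤ q.2.2 i) ∧
          (∀ i : Fin b, q.1 ≤ q.2.2 i ∧ q.2.2 i ≤ t)}
  have hS :
      S = {q | q.1 ≤ t} ∩ {q | q.2 ∈ antitoneChain a q.1 t ×ˢ antitoneChain b q.1 t} :=
    ext fun _ => and_congr_right fun _ => and_assoc.symm
  have hSm : MeasurableSet S := by
    rw [hS]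
    exact ((isClosed_le continuous_fst continuous_const).inter
      ((isClosed_setOf_mem_antitoneChain continuous_snd.fst continuous_fst continuous_const).inter
        (isClosed_setOf_mem_antitoneChain continuous_snd.snd continuous_fst
          continuous_const))).measurableSet
  have hRS : (Icc (0 : ℝ) T ×ˢ
        ((univ.pi fun _ : Fin a => Icc (0 : ℝ) T) ×ˢ
          (univ.pi fun _ : Fin b => Icc (0 : ℝ) T))) ∩ S =
      {p | p.1 ∈ Icc 0 t ∧ p.2 ∈ antitoneChain a p.1 t ×ˢ antitoneChain b p.1 t} := by
    ext ⟨s, x, y⟩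
    simp only [hS, mem_inter_iff, mem_prod, mem_univ_pi, mem_ofPred_eq]
    constructor
    · rintro ⟨⟨hs, -⟩, hst, hchains⟩
      exact ⟨⟨hs.1, hst⟩, hchains⟩
    · rintro ⟨hs, hx, hy⟩
      have hbox {k : ℕ} {z : Fin k → ℝ} (hz : z ∈ antitoneChain k s t) (i : Fin k) :
          z i ∈ Icc 0 T :=
        ⟨hs.1.trans (hz.2 i).1, (hz.2 i).2.trans ht.2⟩
      exact ⟨⟨⟨hs.1, hs.2.trans ht.2⟩, hbox hx, hbox hy⟩, hs.2, hx, hy⟩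
  have ht0 := ht.1
  rw [setIntegral_indicator hSm, setIntegral_const, hRS, measureReal_def,
    volume_setOf_mem_antitoneChain_prod a b ht0, ENNReal.toReal_ofReal (by positivity),
    smul_eq_mul, mul_one]

theorem stmt13_general (T : ℝ) (t : ℝ) (ht : t ∈ Set.Icc (0 : ℝ) T)
    (n m : ℕ) (hn : 1 ≤ n) (hm : 1 ≤ m) :
    (∫ p in (Set.Icc (0 : ℝ) T) ×ˢ
        ((Set.univ.pi fun _ : Fin (n - 1) => Set.Icc (0 : ℝ) T) ×ˢ
          (Set.univ.pi fun _ : Fin (m - 1) => Set.Icc (0 : ℝ) T)),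
      Set.indicator
        {q : ℝ × ((Fin (n - 1) → ℝ) × (Fin (m - 1) → ℝ)) |
          q.1 ≤ t ∧
          (∀ i j : Fin (n - 1), i ≤ j → q.2.1 j ≤ q.2.1 i) ∧
          (∀ i : Fin (n - 1), q.1 ≤ q.2.1 i ∧ q.2.1 i ≤ t) ∧
          (∀ i j : Fin (m - 1), i ≤ j → q.2.2 j ≤ q.2.2 i) ∧
          (∀ i : Fin (m - 1), q.1 ≤ q.2.2 i ∧ q.2.2 i ≤ t)}
        (fun _ => (1 : ℝ)) p)
      = (Nat.choose (n + m - 2) (n - 1) : ℝ) * t ^ (n + m - 1) /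
          (Nat.factorial (n + m - 1) : ℝ) := by
  obtain ⟨a, rfl⟩ := Nat.exists_eq_add_of_le' hn
  obtain ⟨b, rfl⟩ := Nat.exists_eq_add_of_le' hm
  rw [show a + 1 + (b + 1) - 2 = a + b by omega, show a + 1 + (b + 1) - 1 = a + b + 1 by omega]
  exact setIntegral_indicator_antitoneChains a b ht

/-- For `T > 0`, `t ∈ [0,T]` and integers `n, m ≥ 1`, the Lebesgue
integral over `s ∈ [0,T]`, `(x₁,…,x_{n-1}) ∈ [0,T]^{n-1}`, `(y₁,…,y_{m-1}) ∈ [0,T]^{m-1}`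
of the indicator of the event `{s ≤ x_{n-1} ≤ ⋯ ≤ x₁ ≤ t and s ≤ y_{m-1} ≤ ⋯ ≤ y₁ ≤ t}`
(for `n = 1`, resp. `m = 1`, the corresponding chain condition reads `s ≤ t`)
equals `binom(n+m-2, n-1) · t^{n+m-1}/(n+m-1)!`. -/
theorem stmt13 (T : ℝ) (hT : 0 < T) (t : ℝ) (ht : t ∈ Set.Icc (0 : ℝ) T)
    (n m : ℕ) (hn : 1 ≤ n) (hm : 1 ≤ m) :
    (∫ p in (Set.Icc (0 : ℝ) T) ×ˢ
        ((Set.univ.pi fun _ : Fin (n - 1) => Set.Icc (0 : ℝ) T) ×ˢ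
          (Set.univ.pi fun _ : Fin (m - 1) => Set.Icc (0 : ℝ) T)),
      Set.indicator
        {q : ℝ × ((Fin (n - 1) → ℝ) × (Fin (m - 1) → ℝ)) |
          q.1 ≤ t ∧
          (∀ i j : Fin (n - 1), i ≤ j → q.2.1 j ≤ q.2.1 i) ∧
          (∀ i : Fin (n - 1), q.1 ≤ q.2.1 i ∧ q.2.1 i ≤ t) ∧
          (∀ i j : Fin (m - 1), i ≤ j → q.2.2 j ≤ q.2.2 i) ∧
          (∀ i : Fin (m - 1), q.1 ≤ q.2.2 i ∧ q.2.2 i ≤ t)}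
        (fun _ => (1 : ℝ)) p)
      = (Nat.choose (n + m - 2) (n - 1) : ℝ) * t ^ (n + m - 1) /
          (Nat.factorial (n + m - 1) : ℝ) :=
  stmt13_general T t ht n m hn hm
end

section
/- For every real number x, Σ_{n ≥ 0} Σ_{m ≥ 0} x^{n+m+1}/((n+m+1)·n!·m!) = (e^{2x} − 1)/2, where the double series converges absolutely. -/
/-!
Absolute convergence follows by comparing with `|x| · e^{|x|} · e^{|x|}`, which licenses summing
along the diagonals `n + m = k`. There `Σ_{n+m=k} 1/(n! m!) = 2^k/k!`, so the `k`-th diagonal is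
`(2x)^{k+1}/(2 (k+1)!)`, and these add up to the exponential series of `2x` without its constant
term, halved.
-/

open Finset Nat

theorem HasSum.sum_antidiagonal {α A : Type*} [AddCommMonoid α] [TopologicalSpace α]
    [ContinuousAdd α] [RegularSpace α] [AddCommMonoid A] [HasAntidiagonal A]
    {f : A × A → α} {a : α} (h : HasSum f a) :
    HasSum (fun n ↦ ∑ p ∈ antidiagonal n, f p) a :=
  (HasAntidiagonal.sigmaAntidiagonalEquivProd.hasSum_iff.mpr h).sigma
    fun n ↦ (antidiagonal n).hasSum f

theorem sum_antidiagonal_inv_factorial_mul_factorial {K : Type*} [Field K] [CharZero K] (k : ℕ) :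
    ∑ p ∈ antidiagonal k, ((p.1 ! : K) * p.2 !)⁻¹ = 2 ^ k / k ! := by
  have hchoose : ∑ p ∈ antidiagonal k, (k.choose p.1 : K) = 2 ^ k := by
    rw [Nat.sum_antidiagonal_eq_sum_range_succ_mk]
    exact_mod_cast Nat.sum_range_choose k
  rw [← hchoose, sum_div]
  refine sum_congr rfl fun p hp ↦ ?_
  rw [← mem_antidiagonal.mp hp, Nat.cast_add_choose,
    div_div_cancel_left' (Nat.cast_ne_zero.mpr (factorial_ne_zero _))]

theorem sum_antidiagonal_pow_div_succ_mul_factorial_mul_factorial {K : Type*} [Field K]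
    [CharZero K] (x : K) (k : ℕ) :
    ∑ p ∈ antidiagonal k, x ^ (p.1 + p.2 + 1) /
        (((p.1 + p.2 + 1 : ℕ) : K) * (p.1 ! : K) * (p.2 ! : K)) =
      (2 * x) ^ (k + 1) / (k + 1) ! / 2 := by
  calc ∑ p ∈ antidiagonal k, x ^ (p.1 + p.2 + 1) /
          (((p.1 + p.2 + 1 : ℕ) : K) * (p.1 ! : K) * (p.2 ! : K))
      = x ^ (k + 1) / (k + 1 : ℕ) * ∑ p ∈ antidiagonal k, ((p.1 ! : K) * p.2 !)⁻¹ := by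
        rw [mul_sum]
        refine sum_congr rfl fun p hp ↦ ?_
        rw [mem_antidiagonal.mp hp, mul_assoc, div_mul_eq_div_div, div_eq_mul_inv]
    _ = (2 * x) ^ (k + 1) / (k + 1) ! / 2 := by
        rw [sum_antidiagonal_inv_factorial_mul_factorial, Nat.factorial_succ]
        push_cast
        field_simp
        ring

theorem Real.hasSum_pow_succ_div_factorial_succ (y : ℝ) :
    HasSum (fun k ↦ y ^ (k + 1) / (k + 1) !) (Real.exp y - 1) := by
  have := (hasSum_nat_add_iff' 1).mpr (NormedSpace.expSeries_div_hasSum_exp y)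
  simpa [← Real.exp_eq_exp_ℝ] using this

theorem abs_pow_div_succ_mul_factorial_mul_factorial_le (x : ℝ) (n m : ℕ) :
    |x ^ (n + m + 1) / (((n + m + 1 : ℕ) : ℝ) * (n ! : ℝ) * (m ! : ℝ))| ≤
      |x| * (|x| ^ n / n ! * (|x| ^ m / m !)) := by
  have hden : (0 : ℝ) ≤ ((n + m + 1 : ℕ) : ℝ) * n ! * m ! := by positivity
  rw [abs_div, abs_pow, abs_of_nonneg hden]
  calc |x| ^ (n + m + 1) / (((n + m + 1 : ℕ) : ℝ) * n ! * m !)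
      ≤ |x| ^ (n + m + 1) / (1 * n ! * m !) := by
        gcongr
        exact_mod_cast Nat.succ_pos _
    _ = |x| * (|x| ^ n / n ! * (|x| ^ m / m !)) := by
        field_simp
        ring

theorem summable_pow_div_succ_mul_factorial_mul_factorial (x : ℝ) :
    Summable (fun p : ℕ × ℕ =>
      x ^ (p.1 + p.2 + 1) / (((p.1 + p.2 + 1 : ℕ) : ℝ) * (p.1 ! : ℝ) * (p.2 ! : ℝ))) := by
  have hexp := Real.summable_pow_div_factorial |x|
  have hprod := hexp.mul_of_nonneg hexp (fun n ↦ by positivity) (fun n ↦ by positivity)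
  exact .of_norm_bounded (hprod.mul_left |x|)
    fun p ↦ abs_pow_div_succ_mul_factorial_mul_factorial_le x p.1 p.2

/-- For every real `x`,
`Σ_{n ≥ 0} Σ_{m ≥ 0} x^{n+m+1}/((n+m+1)·n!·m!) = (e^{2x} − 1)/2`,
the double series (indexed by all pairs of nonnegative integers) converging
absolutely (for real series, summability in Mathlib is absolute convergence). -/
theorem stmt15 (x : ℝ) :
    Summable (fun p : ℕ × ℕ =>
      x ^ (p.1 + p.2 + 1) /
        (((p.1 + p.2 + 1 : ℕ) : ℝ) * (Nat.factorial p.1 : ℝ) * (Nat.factorial p.2 : ℝ))) ∧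
    (∑' p : ℕ × ℕ,
        x ^ (p.1 + p.2 + 1) /
          (((p.1 + p.2 + 1 : ℕ) : ℝ) * (Nat.factorial p.1 : ℝ) * (Nat.factorial p.2 : ℝ)))
      = (Real.exp (2 * x) - 1) / 2 := by
  have hs := summable_pow_div_succ_mul_factorial_mul_factorial x
  refine ⟨hs, hs.hasSum.sum_antidiagonal.unique ?_⟩
  refine ((Real.hasSum_pow_succ_div_factorial_succ (2 * x)).div_const 2).congr_fun fun k ↦ ?_
  rw [sum_antidiagonal_pow_div_succ_mul_factorial_mul_factorial]
end
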